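/- arXiv:2104.00838 — 9 statements merged into one kernel-verified Lean document; each statement's English description precedes it below -/
import Mathlib

section
/- Let p be a prime number and let n ≥ 1. Then for every matrix L ∈ Ψ(p-1) (i.e., every n×n matrix of nonnegative integers all of whose row sums and column sums equal p-1), the coefficient C_L of the monomial x^L in (det X)^{p-1} is nonzero. -/
/-!
Over `𝔽_p` put `G = (-1)^n ∑_{L ∈ Ψ(p-1)} x^L / L!` with `L! = ∏ l_{ij}!`. We show
`det X * G = (det X)^p = ∑_σ sign σ * ∏_i x_{σ i, i}^p` (Frobenius) and cancel `det X`, so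
`G = (det X)^{p-1}` and `C_L ≡ (-1)^n / L! ≢ 0 (mod p)`.

For `d ∈ Ψ(p)` the coefficient of `x^d` in `det X * G` is `(-1)^n det B`, where
`B_{ri} = [d_{ri} ≠ 0] / (d_{ri} - 1)! * ∏_{r' ≠ r} 1 / d_{r'i}!`. If every column of `d` contains
the entry `p`, then `B` is minus a permutation matrix by Wilson's theorem `(p-1)! = -1`, which
matches the term of `(det X)^p`. Otherwise the indicator of the rows without an entry `p` is a
nonzero left kernel vector of `B`: on a column without an entry `p`, `B_{ri}` is `d_{ri}` times a
factor depending only on `i`, and the column sum `p` vanishes in `𝔽_p`.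
-/

/-- The coefficient `C_L` of the monomial `x^L = ∏ x_{ij}^{l_{ij}}` in `(det X)^m`,
where `X` is the `n × n` matrix of indeterminates `x_{ij}`. -/
noncomputable def coeffC (n m : ℕ) (L : Matrix (Fin n) (Fin n) ℕ) : ℤ :=
  MvPolynomial.coeff
    (Finsupp.equivFunOnFinite.symm fun p : Fin n × Fin n => L p.1 p.2)
    ((Matrix.det (Matrix.of fun i j : Fin n =>
      (MvPolynomial.X (i, j) : MvPolynomial (Fin n × Fin n) ℤ))) ^ m)

open Matrix MvPolynomial Equiv Finset Nat

noncomputable section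

namespace Glynn

variable {ι : Type*} [Fintype ι]

lemma eq_zero_of_sum_eq_apply {f : ι → ℕ} {a b : ι} (h : ∑ i, f i = f a) (hb : b ≠ a) :
    f b = 0 := by
  classical
  rw [← add_sum_erase _ _ (mem_univ a), add_eq_left, sum_eq_zero_iff] at h
  exact h b (mem_erase.2 ⟨hb, mem_univ b⟩)

def HasLineSums (d : ι × ι →₀ ℕ) (m : ℕ) : Prop :=
  (∀ i, ∑ j, d (i, j) = m) ∧ ∀ j, ∑ i, d (i, j) = m

namespace HasLineSums

variable {d e : ι × ι →₀ ℕ} {m k : ℕ}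

lemma add (hd : HasLineSums d m) (he : HasLineSums e k) : HasLineSums (d + e) (m + k) := by
  refine ⟨fun i => ?_, fun j => ?_⟩ <;>
    simp only [Finsupp.add_apply, sum_add_distrib, hd.1, hd.2, he.1, he.2]

lemma of_add (hde : HasLineSums (d + e) (m + k)) (he : HasLineSums e k) : HasLineSums d m := by
  refine ⟨fun i => ?_, fun j => ?_⟩
  · have := hde.1 i
    simp only [Finsupp.add_apply, sum_add_distrib, he.1] at this
    omega
  · have := hde.2 j
    simp only [Finsupp.add_apply, sum_add_distrib, he.2] at this
    omega

lemma smul (hd : HasLineSums d m) (k : ℕ) : HasLineSums (k • d) (k * m) := by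
  refine ⟨fun i => ?_, fun j => ?_⟩ <;>
    simp only [Finsupp.smul_apply, smul_eq_mul, ← mul_sum, hd.1, hd.2]

lemma apply_le (hd : HasLineSums d m) (q : ι × ι) : d q ≤ m :=
  hd.1 q.1 ▸ single_le_sum (f := fun j => d (q.1, j)) (fun _ _ => Nat.zero_le _) (mem_univ q.2)

lemma eq_zero_of_mem_col (hd : HasLineSums d m) {a r i : ι} (ha : d (a, i) = m) (hr : r ≠ a) :
    d (r, i) = 0 :=
  eq_zero_of_sum_eq_apply (f := fun r => d (r, i)) ((hd.2 i).trans ha.symm) hr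

lemma eq_zero_of_mem_row (hd : HasLineSums d m) {r c i : ι} (hc : d (r, c) = m) (hi : i ≠ c) :
    d (r, i) = 0 :=
  eq_zero_of_sum_eq_apply (f := fun i => d (r, i)) ((hd.1 r).trans hc.symm) hi

end HasLineSums

variable [DecidableEq ι]

def permExponent (σ : Perm ι) : ι × ι →₀ ℕ :=
  ∑ i, Finsupp.single (σ i, i) 1

lemma permExponent_apply (σ : Perm ι) (r i : ι) :
    permExponent σ (r, i) = if σ i = r then 1 else 0 := by
  rw [permExponent, Finsupp.finsetSum_apply, sum_eq_single i]
  · simp [Finsupp.single_apply, eq_comm]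
  · intro j _ hj
    simp [hj]
  · simp

lemma hasLineSums_permExponent (σ : Perm ι) : HasLineSums (permExponent σ) 1 := by
  refine ⟨fun r => ?_, fun i => ?_⟩
  · simp [permExponent_apply, ← Equiv.eq_symm_apply]
  · simp [permExponent_apply]

lemma permExponent_le_iff {σ : Perm ι} {d : ι × ι →₀ ℕ} :
    permExponent σ ≤ d ↔ ∀ i, d (σ i, i) ≠ 0 := by
  simp only [Finsupp.le_def, Prod.forall, permExponent_apply]
  refine ⟨fun h i => ?_, fun h r i => ?_⟩
  · simpa [Nat.one_le_iff_ne_zero] using h (σ i) i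
  · split_ifs with hri
    · exact Nat.one_le_iff_ne_zero.2 (hri ▸ h i)
    · exact Nat.zero_le _

lemma hasLineSums_tsub_permExponent_iff {σ : Perm ι} {d : ι × ι →₀ ℕ} {m : ℕ}
    (h : permExponent σ ≤ d) : HasLineSums (d - permExponent σ) m ↔ HasLineSums d (m + 1) := by
  have hσ := hasLineSums_permExponent σ
  refine ⟨fun hd => tsub_add_cancel_of_le h ▸ hd.add hσ, fun hd => .of_add ?_ hσ⟩
  rwa [tsub_add_cancel_of_le h]

lemma det_mvPolynomialX (R : Type*) [CommRing R] :
    (mvPolynomialX ι ι R).det = ∑ σ : Perm ι, monomial (permExponent σ) (Perm.sign σ : R) := by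
  rw [det_apply]
  refine sum_congr rfl fun σ _ => ?_
  simp only [mvPolynomialX_apply, X, ← monomial_sum_one, permExponent, Units.smul_def,
    smul_monomial, Int.smul_one_eq_cast]

lemma coeff_det_mvPolynomialX_mul {R : Type*} [CommRing R] (f : MvPolynomial (ι × ι) R)
    (d : ι × ι →₀ ℕ) :
    coeff d ((mvPolynomialX ι ι R).det * f) = ∑ σ : Perm ι,
      if permExponent σ ≤ d then (Perm.sign σ : R) * coeff (d - permExponent σ) f else 0 := by
  simp only [det_mvPolynomialX, sum_mul, coeff_sum, coeff_monomial_mul']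

lemma coeff_det_mvPolynomialX_pow_char (p : ℕ) [Fact p.Prime] (d : ι × ι →₀ ℕ) :
    coeff d ((mvPolynomialX ι ι (ZMod p)).det ^ p) = ∑ σ : Perm ι,
      if p • permExponent σ = d then (Perm.sign σ : ZMod p) else 0 := by
  simp only [det_mvPolynomialX, sum_pow_char, monomial_pow, ZMod.pow_card, coeff_sum,
    coeff_monomial]

lemma map_det_mvPolynomialX {R S : Type*} [CommRing R] [CommRing S] (f : R →+* S) :
    map f (mvPolynomialX ι ι R).det = (mvPolynomialX ι ι S).det := by
  rw [RingHom.map_det]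
  congr 1
  ext i j
  simp

open Classical in
def glynnCoeff (p : ℕ) (d : ι × ι →₀ ℕ) : ZMod p :=
  if HasLineSums d (p - 1) then (-1) ^ Fintype.card ι * ∏ q, ((d q)! : ZMod p)⁻¹ else 0

def glynnPoly (p : ℕ) : MvPolynomial (ι × ι) (ZMod p) :=
  ∑ d ∈ Iic (Finsupp.equivFunOnFinite.symm fun _ => p - 1), monomial d (glynnCoeff p d)

lemma coeff_glynnPoly (p : ℕ) (d : ι × ι →₀ ℕ) : coeff d (glynnPoly p) = glynnCoeff p d := by
  rw [glynnPoly, coeff_sum]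
  simp only [coeff_monomial, sum_ite_eq', mem_Iic, ite_eq_left_iff]
  intro hd
  rw [glynnCoeff, if_neg]
  exact fun h => hd (Finsupp.le_def.2 fun q => by simpa using h.apply_le q)

def glynnMatrix (p : ℕ) (d : ι × ι →₀ ℕ) : Matrix ι ι (ZMod p) :=
  of fun r i => if d (r, i) ≠ 0 then
    ((d (r, i) - 1)! : ZMod p)⁻¹ * ∏ r' ∈ univ.erase r, ((d (r', i))! : ZMod p)⁻¹ else 0

lemma prod_glynnMatrix (p : ℕ) (d : ι × ι →₀ ℕ) (σ : Perm ι) :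
    ∏ i, glynnMatrix p d (σ i) i =
      if permExponent σ ≤ d then ∏ q, (((d - permExponent σ) q)! : ZMod p)⁻¹ else 0 := by
  simp only [glynnMatrix, of_apply, prod_ite_zero, mem_univ, true_implies,
    ← permExponent_le_iff]
  refine if_congr Iff.rfl ?_ rfl
  rw [Fintype.prod_prod_type_right]
  refine prod_congr rfl fun i _ => ?_
  rw [← mul_prod_erase univ _ (mem_univ (σ i))]
  congr 1
  · simp [permExponent_apply]
  · refine prod_congr rfl fun r hr => ?_
    simp [permExponent_apply, (ne_of_mem_erase hr).symm]

variable {p : ℕ} [Fact p.Prime] {d : ι × ι →₀ ℕ}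

lemma coeff_det_mul_glynnPoly_of_hasLineSums (hd : HasLineSums d p) :
    coeff d ((mvPolynomialX ι ι (ZMod p)).det * glynnPoly p) =
      (-1) ^ Fintype.card ι * (glynnMatrix p d).det := by
  rw [coeff_det_mvPolynomialX_mul, det_apply, mul_sum]
  refine sum_congr rfl fun σ _ => ?_
  rw [coeff_glynnPoly, Units.smul_def, zsmul_eq_mul, prod_glynnMatrix]
  split_ifs with h
  · rw [glynnCoeff, if_pos ((hasLineSums_tsub_permExponent_iff h).2 ?_)]
    · ring
    · rwa [Nat.sub_add_cancel (Fact.out : p.Prime).one_le]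
  · simp

lemma glynnMatrix_apply_of_lt {i : ι} (hi : ∀ r, d (r, i) < p) (r : ι) :
    glynnMatrix p d r i = d (r, i) * ∏ r', ((d (r', i))! : ZMod p)⁻¹ := by
  rw [glynnMatrix, of_apply, ← mul_prod_erase univ _ (mem_univ r), ← mul_assoc]
  split_ifs with h
  · obtain ⟨k, hk⟩ := Nat.exists_eq_succ_of_ne_zero h
    have hk0 : ((k + 1 : ℕ) : ZMod p) ≠ 0 := by
      rw [Ne, ZMod.natCast_eq_zero_iff]
      exact Nat.not_dvd_of_pos_of_lt k.succ_pos (by have := hi r; omega)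
    rw [hk, Nat.succ_sub_one, Nat.factorial_succ, Nat.cast_mul, mul_inv, ← mul_assoc,
      mul_inv_cancel₀ hk0, one_mul]
  · simp [not_not.1 h]

lemma glynnMatrix_apply_of_eq (hd : HasLineSums d p) {a i : ι} (ha : d (a, i) = p) (r : ι) :
    glynnMatrix p d r i = if r = a then -1 else 0 := by
  split_ifs with hr
  · subst hr
    rw [glynnMatrix, of_apply, if_pos (ha ▸ (Fact.out : p.Prime).ne_zero), ha,
      ZMod.wilsons_lemma, inv_neg, inv_one, prod_eq_one, mul_one]
    intro r' hr'
    simp [hd.eq_zero_of_mem_col ha (ne_of_mem_erase hr')]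
  · rw [glynnMatrix, of_apply, if_neg (not_not.2 (hd.eq_zero_of_mem_col ha hr))]

lemma det_glynnMatrix_eq_zero (hd : HasLineSums d p) {i₀ : ι} (hi₀ : ∀ r, d (r, i₀) ≠ p) :
    (glynnMatrix p d).det = 0 := by
  classical
  refine exists_vecMul_eq_zero_iff.1 ⟨fun r => if ∃ c, d (r, c) = p then 0 else 1, ?_, ?_⟩
  · obtain ⟨r, hr⟩ : ∃ r, d (r, i₀) ≠ 0 := by
      by_contra! h
      have := hd.2 i₀
      simp only [h, sum_const_zero] at this
      exact (Fact.out : p.Prime).ne_zero this.symm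
    refine Function.ne_iff.2 ⟨r, ?_⟩
    rw [if_neg]
    · exact one_ne_zero
    rintro ⟨c, hc⟩
    exact hr (hd.eq_zero_of_mem_row hc fun h => hi₀ r (by rwa [h]))
  · funext i
    simp only [vecMul, dotProduct, Pi.zero_apply]
    by_cases hi : ∃ a, d (a, i) = p
    · obtain ⟨a, ha⟩ := hi
      refine sum_eq_zero fun r _ => ?_
      rw [glynnMatrix_apply_of_eq hd ha]
      split_ifs with h1 h2 <;> simp_all
    · simp only [not_exists] at hi
      have hlt r : d (r, i) < p := (hd.apply_le _).lt_of_ne (hi r)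
      simp_rw [glynnMatrix_apply_of_lt hlt]
      calc _ = ∑ r, (d (r, i) : ZMod p) * ∏ r', ((d (r', i))! : ZMod p)⁻¹ := by
            refine sum_congr rfl fun r _ => ?_
            split_ifs with h
            · obtain ⟨c, hc⟩ := h
              simp [hd.eq_zero_of_mem_row (i := i) hc fun h' => hi r (by rwa [h'])]
            · rw [one_mul]
        _ = 0 := by rw [← sum_mul, ← Nat.cast_sum, hd.2 i, ZMod.natCast_self, zero_mul]

lemma neg_one_pow_mul_prod_glynnMatrix (hd : HasLineSums d p) (hall : ∀ i, ∃ a, d (a, i) = p)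
    (σ : Perm ι) :
    (-1) ^ Fintype.card ι * ∏ i, glynnMatrix p d (σ i) i =
      if p • permExponent σ = d then 1 else 0 := by
  choose a ha using hall
  have hσ : (∀ i ∈ univ, σ i = a i) ↔ p • permExponent σ = d := by
    refine ⟨fun h => ?_, fun h i _ => ?_⟩
    · ext ⟨r, i⟩
      rw [Finsupp.smul_apply, permExponent_apply, h i (mem_univ i)]
      split_ifs with hr
      · simp [← hr, ha i]
      · simp [hd.eq_zero_of_mem_col (ha i) (Ne.symm hr)]
    · by_contra hne
      have h₀ := hd.eq_zero_of_mem_col (ha i) hne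
      simp [← h, permExponent_apply, (Fact.out : p.Prime).ne_zero] at h₀
  simp only [glynnMatrix_apply_of_eq hd (ha _), prod_ite_zero, hσ, prod_const]
  split_ifs <;> simp [← mul_pow]

theorem coeff_det_mul_glynnPoly (d : ι × ι →₀ ℕ) :
    coeff d ((mvPolynomialX ι ι (ZMod p)).det * glynnPoly p) =
      coeff d ((mvPolynomialX ι ι (ZMod p)).det ^ p) := by
  have hp : p.Prime := Fact.out
  rw [coeff_det_mvPolynomialX_pow_char]
  by_cases hd : HasLineSums d p
  · rw [coeff_det_mul_glynnPoly_of_hasLineSums hd]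
    by_cases hall : ∀ i, ∃ a, d (a, i) = p
    · rw [det_apply, mul_sum]
      refine sum_congr rfl fun σ _ => ?_
      rw [Units.smul_def, zsmul_eq_mul, mul_left_comm,
        neg_one_pow_mul_prod_glynnMatrix hd hall]
      simp
    · obtain ⟨i₀, hi₀⟩ := not_forall.1 hall
      rw [det_glynnMatrix_eq_zero hd (not_exists.1 hi₀), mul_zero, eq_comm]
      refine sum_eq_zero fun σ _ => if_neg fun h => hi₀ ⟨σ i₀, ?_⟩
      simp [← h, permExponent_apply]
  · rw [coeff_det_mvPolynomialX_mul]
    refine (sum_eq_zero fun σ _ => ?_).trans (sum_eq_zero fun σ _ => ?_).symm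
    · split_ifs with h
      · rw [coeff_glynnPoly, glynnCoeff, if_neg, mul_zero]
        rwa [hasLineSums_tsub_permExponent_iff h, Nat.sub_add_cancel hp.one_le]
      · rfl
    · refine if_neg fun h => hd ?_
      simpa [← h] using (hasLineSums_permExponent σ).smul p

theorem glynnPoly_eq_det_pow : glynnPoly p = (mvPolynomialX ι ι (ZMod p)).det ^ (p - 1) := by
  refine mul_left_cancel₀ (det_mvPolynomialX_ne_zero ι (ZMod p)) ?_
  rw [mul_pow_sub_one (Fact.out : p.Prime).ne_zero]
  exact MvPolynomial.ext _ _ coeff_det_mul_glynnPoly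

theorem coeff_det_mvPolynomialX_pow_pred_ne_zero (hd : HasLineSums d (p - 1)) :
    coeff d ((mvPolynomialX ι ι (ZMod p)).det ^ (p - 1)) ≠ 0 := by
  rw [← glynnPoly_eq_det_pow, coeff_glynnPoly, glynnCoeff, if_pos hd]
  refine mul_ne_zero (pow_ne_zero _ (neg_ne_zero.2 one_ne_zero))
    (prod_ne_zero_iff.2 fun q _ => inv_ne_zero ?_)
  rw [Ne, ZMod.natCast_eq_zero_iff, (Fact.out : p.Prime).dvd_factorial, not_le]
  exact (hd.apply_le q).trans_lt (Nat.sub_lt (Fact.out : p.Prime).pos one_pos)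

end Glynn

end

theorem glynn_nonzero_general (p n : ℕ) (hp : p.Prime)
    (L : Matrix (Fin n) (Fin n) ℕ)
    (hrow : ∀ i, ∑ j, L i j = p - 1)
    (hcol : ∀ j, ∑ i, L i j = p - 1) :
    coeffC n (p - 1) L ≠ 0 := by
  have := Fact.mk hp
  set d := Finsupp.equivFunOnFinite.symm fun q : Fin n × Fin n => L q.1 q.2
  have hd : Glynn.HasLineSums d (p - 1) := ⟨fun i => by simpa [d] using hrow i,
    fun j => by simpa [d] using hcol j⟩
  have hcast : ((coeffC n (p - 1) L : ℤ) : ZMod p) =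
      coeff d ((mvPolynomialX (Fin n) (Fin n) (ZMod p)).det ^ (p - 1)) := by
    rw [← Glynn.map_det_mvPolynomialX (Int.castRingHom (ZMod p)), ← map_pow, coeff_map]
    rfl
  intro h
  exact Glynn.coeff_det_mvPolynomialX_pow_pred_ne_zero hd (by rw [← hcast, h, Int.cast_zero])

theorem glynn_nonzero (p n : ℕ) (hp : p.Prime) (hn : 1 ≤ n)
    (L : Matrix (Fin n) (Fin n) ℕ)
    (hrow : ∀ i, ∑ j, L i j = p - 1)
    (hcol : ∀ j, ∑ i, L i j = p - 1) :
    coeffC n (p - 1) L ≠ 0 :=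
  glynn_nonzero_general p n hp L hrow hcol
end

section
/- Let p be a prime number and let n ≥ 1. Then for every matrix L = (l_{ij}) ∈ Ψ(p-1), one has L! · C_L ≡ (-1)^n (mod p), where L! = ∏_{1≤i,j≤n} l_{ij}! and C_L is the coefficient of x^L in (det X)^{p-1}. -/
/-!
For `a ≠ b` the derivation `∑ j, X (b, j) ∂/∂X (a, j)` kills `det X`: by Laplace expansion along
row `a`, `∂(det X)/∂X (a, j)` is the adjugate entry `adj(X) j a`, and
`∑ j, X (b, j) adj(X) j a = (X adj(X)) b a = 0`. So it also kills `(det X)^m`, and reading off the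
coefficient of `x^N` gives, for `g(L) = L! C_L`, the relation
`∑ j, N (b, j) g(N - e_{bj} + e_{aj}) = 0`.

Let `L` have all line sums `m = p - 1` and a nonzero off-diagonal entry at `(a, c)`. Apply the
relation to `N = L - e_{ac} + e_{cc}` and `b = c`: the `j = c` term is `N (c, c) g(L)`, the other
terms are `g` at matrices with the same line sums and smaller off-diagonal mass, and the weights
`N (c, j)` sum to `m + 1 = p`. By induction on the off-diagonal mass all these values are
congruent to `g(m I) = (m!)^n ≡ (-1)^n` (Wilson), and since `0 < N (c, c) < p` so is `g(L)`.
-/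

open MvPolynomial Matrix Finset

namespace Glynn

section Determinant

variable {ι R : Type*} [Fintype ι] [DecidableEq ι] [CommRing R]

lemma det_mem_of_forall_mem {A : Type*} [CommRing A] [Algebra R A]
    (S : Subalgebra R A) (M : Matrix ι ι A) (hM : ∀ i j, M i j ∈ S) : M.det ∈ S := by
  have := RingHom.map_det S.val.toRingHom (of fun i j => (⟨M i j, hM i j⟩ : S))
  rw [show S.val.toRingHom.mapMatrix (of fun i j => (⟨M i j, hM i j⟩ : S)) = M from rfl] at this
  exact this ▸ Subtype.property _

lemma pderiv_adjugate_mvPolynomialX (a j k : ι) :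
    pderiv (a, j) (adjugate (mvPolynomialX ι ι R) k a) = 0 := by
  have hdet : ((mvPolynomialX ι ι R).updateRow a (Pi.single k 1)).det
      ∈ supported R {x : ι × ι | x.1 ≠ a} := by
    refine det_mem_of_forall_mem _ _ fun i l => ?_
    by_cases hi : i = a
    · subst hi
      rw [updateRow_self, Pi.single_apply]
      split_ifs
      exacts [one_mem _, zero_mem _]
    · rw [updateRow_ne hi, mvPolynomialX_apply]
      exact Algebra.subset_adjoin (Set.mem_image_of_mem X hi)
  rw [adjugate_apply]
  exact pderiv_eq_zero_of_notMem_vars fun h => mem_supported.mp hdet h rfl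

lemma pderiv_det_mvPolynomialX (a j : ι) :
    pderiv (a, j) (mvPolynomialX ι ι R).det = adjugate (mvPolynomialX ι ι R) j a := by
  rw [det_eq_sum_mul_adjugate_row _ a, map_sum]
  simp [pderiv_adjugate_mvPolynomialX, pderiv_X, Pi.single_apply]

lemma sum_X_mul_pderiv_det_pow {a b : ι} (hab : a ≠ b) (m : ℕ) :
    ∑ j, X (b, j) * pderiv (a, j) ((mvPolynomialX ι ι R).det ^ m) = 0 := by
  simp_rw [pderiv_pow, pderiv_det_mvPolynomialX]
  calc _ = m * (mvPolynomialX ι ι R).det ^ (m - 1) *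
        (mvPolynomialX ι ι R * adjugate (mvPolynomialX ι ι R)) b a := by
        rw [mul_apply, mul_sum]
        exact sum_congr rfl fun j _ => by rw [mvPolynomialX_apply]; ring
    _ = 0 := by
      rw [mul_adjugate, Matrix.smul_apply, one_apply_ne hab.symm, smul_zero, mul_zero]

lemma killCompl_det_mvPolynomialX :
    killCompl Function.diag_injective (mvPolynomialX ι ι R).det = ∏ i, X i := by
  rw [AlgHom.map_det, ← det_diagonal]
  congr 1
  refine Matrix.ext fun i j => ?_
  rw [AlgHom.mapMatrix_apply, map_apply, mvPolynomialX_apply, diagonal_apply]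
  split_ifs with h
  · subst h
    rw [← killCompl_rename_app Function.diag_injective (X (R := R) i), rename_X]
    rfl
  · simp [killCompl, h]

lemma coeff_det_pow_diagonal (m : ℕ) :
    coeff ((Finsupp.equivFunOnFinite.symm fun _ : ι => m).mapDomain Function.diag)
      ((mvPolynomialX ι ι R).det ^ m) = 1 := by
  have hmon : ∏ i : ι, (X i : MvPolynomial ι R) ^ m
      = monomial (Finsupp.equivFunOnFinite.symm fun _ => m) 1 := by
    rw [monomial_eq, C_1, one_mul, Finsupp.prod_fintype _ _ (by simp)]
    rfl
  rw [← coeff_killCompl Function.diag_injective, map_pow, killCompl_det_mvPolynomialX,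
    ← prod_pow, hmon, coeff_monomial, if_pos rfl]

end Determinant

section Factorial

variable {σ R : Type*} [Fintype σ]

def factorial (d : σ →₀ ℕ) : ℕ := ∏ x, (d x).factorial

def factorialCoeff [CommSemiring R] (F : MvPolynomial σ R) (d : σ →₀ ℕ) : R :=
  factorial d * coeff d F

variable [DecidableEq σ]

lemma factorial_add_single (d : σ →₀ ℕ) (v : σ) :
    factorial (d + Finsupp.single v 1) = (d v + 1) * factorial d := by
  rw [factorial, factorial, Fintype.prod_eq_mul_prod_compl v,
    Fintype.prod_eq_mul_prod_compl v (fun x => (d x).factorial),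
    prod_congr rfl fun x hx => by rw [Finsupp.add_apply,
      Finsupp.single_eq_of_ne (by simpa using hx), add_zero]]
  simp [Nat.factorial_succ, mul_assoc]

lemma factorial_mul_coeff_X_mul_pderiv [CommSemiring R] {u v : σ} (huv : u ≠ v)
    (F : MvPolynomial σ R) (N : σ →₀ ℕ) :
    factorial N * coeff N (X v * pderiv u F)
      = N v * factorialCoeff F (N - Finsupp.single v 1 + Finsupp.single u 1) := by
  rw [coeff_X_mul']
  by_cases hv : N v = 0
  · simp [hv]
  set K := N - Finsupp.single v 1
  have hN : K + Finsupp.single v 1 = N :=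
    tsub_add_cancel_of_le (Finsupp.single_le_iff.mpr (Nat.one_le_iff_ne_zero.mpr hv))
  have hKv : K v + 1 = N v := by rw [← hN, Finsupp.add_apply, Finsupp.single_eq_same]
  have hKu : K u = N u := by rw [← hN, Finsupp.add_apply, Finsupp.single_eq_of_ne huv, add_zero]
  have hfN : factorial N = N v * factorial K := by
    conv_lhs => rw [← hN]
    rw [factorial_add_single, hKv]
  rw [if_pos (Finsupp.mem_support_iff.mpr hv), coeff_pderiv, factorialCoeff,
    factorial_add_single, hfN, hKu]
  push_cast
  ring

end Factorial

lemma sum_factorialCoeff_det_pow_eq_zero {ι R : Type*} [Fintype ι] [DecidableEq ι] [CommRing R]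
    {a b : ι} (hab : a ≠ b) (m : ℕ) (N : ι × ι →₀ ℕ) :
    ∑ j, N (b, j) * factorialCoeff ((mvPolynomialX ι ι R).det ^ m)
      (N - Finsupp.single (b, j) 1 + Finsupp.single (a, j) 1) = 0 := by
  have := congrArg (fun F => (factorial N : R) * coeff N F)
    (sum_X_mul_pderiv_det_pow (R := R) hab m)
  simp only [coeff_sum, mul_sum, coeff_zero, mul_zero] at this
  rw [← this]
  exact sum_congr rfl fun j _ =>
    (factorial_mul_coeff_X_mul_pderiv (by simpa using hab) _ N).symm

section LineSums

variable {ι : Type*}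

noncomputable def rowSums (d : ι × ι →₀ ℕ) : ι →₀ ℕ := d.mapDomain Prod.fst

noncomputable def colSums (d : ι × ι →₀ ℕ) : ι →₀ ℕ := d.mapDomain Prod.snd

lemma rowSums_add_single (d : ι × ι →₀ ℕ) (x : ι × ι) :
    rowSums (d + Finsupp.single x 1) = rowSums d + Finsupp.single x.1 1 := by
  simp [rowSums, Finsupp.mapDomain_add]

lemma colSums_add_single (d : ι × ι →₀ ℕ) (x : ι × ι) :
    colSums (d + Finsupp.single x 1) = colSums d + Finsupp.single x.2 1 := by
  simp [colSums, Finsupp.mapDomain_add]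

def IsBalanced (m : ℕ) (d : ι × ι →₀ ℕ) : Prop := ∀ i, rowSums d i = m ∧ colSums d i = m

lemma IsBalanced.move {m : ℕ} {K K' : ι × ι →₀ ℕ} {a c j : ι}
    (hd : IsBalanced m (K + Finsupp.single (a, c) 1))
    (hN : K + Finsupp.single (c, c) 1 = K' + Finsupp.single (c, j) 1) :
    IsBalanced m (K' + Finsupp.single (a, j) 1) := by
  have hrow : rowSums K' = rowSums K :=
    add_right_cancel (by simpa only [rowSums_add_single] using congrArg rowSums hN.symm)
  have hcol := congrArg colSums hN
  simp only [colSums_add_single] at hcol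
  intro i
  simpa only [IsBalanced, rowSums_add_single, colSums_add_single, hrow, hcol] using hd i

lemma exists_add_single_eq {d : ι × ι →₀ ℕ} {x : ι × ι} (hx : d x ≠ 0) :
    ∃ K, K + Finsupp.single x 1 = d :=
  ⟨d - Finsupp.single x 1,
    tsub_add_cancel_of_le (Finsupp.single_le_iff.mpr (Nat.one_le_iff_ne_zero.mpr hx))⟩

variable [Fintype ι]

lemma rowSums_apply (d : ι × ι →₀ ℕ) (i : ι) : rowSums d i = ∑ j, d (i, j) := by
  classical
  simp [rowSums, Finsupp.mapDomain, Finsupp.single_apply, Finsupp.sum_fintype,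
    Fintype.sum_prod_type]

lemma colSums_apply (d : ι × ι →₀ ℕ) (j : ι) : colSums d j = ∑ i, d (i, j) := by
  classical
  simp [colSums, Finsupp.mapDomain, Finsupp.single_apply, Finsupp.sum_fintype,
    Fintype.sum_prod_type]

lemma le_colSums (d : ι × ι →₀ ℕ) (x : ι × ι) : d x ≤ colSums d x.2 := by
  rw [colSums_apply]
  exact single_le_sum (f := fun i => d (i, x.2)) (fun _ _ => Nat.zero_le _) (mem_univ x.1)

variable {m : ℕ} {K : ι × ι →₀ ℕ} {a c : ι}

lemma IsBalanced.sum_add_single_diag_row (hd : IsBalanced m (K + Finsupp.single (a, c) 1))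
    (hac : a ≠ c) : ∑ j, (K + Finsupp.single (c, c) 1 : ι × ι →₀ ℕ) (c, j) = m + 1 := by
  have hK : rowSums K c = m := by
    simpa [rowSums_add_single, Finsupp.single_apply, hac] using (hd c).1
  rw [← rowSums_apply, rowSums_add_single]
  simp [hK]

lemma IsBalanced.add_single_diag_apply_le (hd : IsBalanced m (K + Finsupp.single (a, c) 1)) :
    (K + Finsupp.single (c, c) 1 : ι × ι →₀ ℕ) (c, c) ≤ m := by
  have := le_colSums (K + Finsupp.single (c, c) 1) (c, c)
  rwa [colSums_add_single, ← colSums_add_single K (a, c), (hd c).2] at this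

end LineSums

section OffDiagonal

variable {ι : Type*} [DecidableEq ι]

def offDiag (d : ι × ι →₀ ℕ) : ℕ := d.sum fun x k => if x.1 = x.2 then 0 else k

lemma offDiag_add_single (d : ι × ι →₀ ℕ) (x : ι × ι) :
    offDiag (d + Finsupp.single x 1) = offDiag d + if x.1 = x.2 then 0 else 1 := by
  rw [offDiag, Finsupp.sum_add_index' (by simp) (fun _ _ _ => by split_ifs <;> simp),
    Finsupp.sum_single_index (by simp)]
  rfl

lemma offDiag_move {K K' : ι × ι →₀ ℕ} {a c j : ι} (hac : a ≠ c) (hjc : j ≠ c)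
    (hN : K + Finsupp.single (c, c) 1 = K' + Finsupp.single (c, j) 1) :
    offDiag (K' + Finsupp.single (a, j) 1) < offDiag (K + Finsupp.single (a, c) 1) := by
  have := congrArg offDiag hN
  simp only [offDiag_add_single] at this ⊢
  split_ifs at this ⊢ <;> simp_all

lemma apply_eq_zero_of_offDiag_eq_zero {d : ι × ι →₀ ℕ} (hd : offDiag d = 0) {x : ι × ι}
    (hx : x.1 ≠ x.2) : d x = 0 := by
  by_contra h
  obtain ⟨K, rfl⟩ := exists_add_single_eq h
  simp [offDiag_add_single, hx] at hd

lemma exists_apply_ne_zero_of_offDiag_ne_zero {d : ι × ι →₀ ℕ} (hd : offDiag d ≠ 0) :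
    ∃ x : ι × ι, x.1 ≠ x.2 ∧ d x ≠ 0 := by
  obtain ⟨x, -, hx⟩ := exists_ne_zero_of_sum_ne_zero hd
  exact ⟨x, fun h => hx (if_pos h), fun h => hx (by simp [h])⟩

end OffDiagonal

section Congruence

variable {ι R : Type*} [Fintype ι] [DecidableEq ι] [CommRing R]

lemma factorialCoeff_det_pow_of_offDiag_eq_zero {m : ℕ} {d : ι × ι →₀ ℕ} (hd : IsBalanced m d)
    (hoff : offDiag d = 0) :
    factorialCoeff ((mvPolynomialX ι ι R).det ^ m) d = (m.factorial ^ Fintype.card ι : ℕ) := by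
  have hdiag : ∀ i j, d (i, j) = if i = j then m else 0 := fun i j => by
    split_ifs with h
    · subst h
      rw [← (hd i).1, rowSums_apply, sum_eq_single i
        (fun j _ hj => apply_eq_zero_of_offDiag_eq_zero hoff (Ne.symm hj)) (by simp)]
    · exact apply_eq_zero_of_offDiag_eq_zero hoff h
  have hd_eq : d = (Finsupp.equivFunOnFinite.symm fun _ : ι => m).mapDomain Function.diag := by
    ext ⟨i, j⟩
    rw [hdiag]
    split_ifs with h
    · subst h
      exact (Finsupp.mapDomain_apply Function.diag_injective
        (Finsupp.equivFunOnFinite.symm fun _ : ι => m) i).symm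
    · exact (Finsupp.mapDomain_of_notMem_range _ _ fun ⟨k, hk⟩ =>
        h ((congrArg Prod.fst hk).symm.trans (congrArg Prod.snd hk))).symm
  have hfac : factorial d = m.factorial ^ Fintype.card ι := by
    simp [factorial, Fintype.prod_prod_type, hdiag, apply_ite Nat.factorial]
  rw [factorialCoeff, hfac, hd_eq, coeff_det_pow_diagonal, mul_one]

lemma factorialCoeff_det_pow_eq_of_forall_offDiag_lt {p : ℕ} [Fact p.Prime] (s : ZMod p)
    {K : ι × ι →₀ ℕ} {a c : ι} (hac : a ≠ c)
    (hd : IsBalanced (p - 1) (K + Finsupp.single (a, c) 1))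
    (ih : ∀ e, IsBalanced (p - 1) e → offDiag e < offDiag (K + Finsupp.single (a, c) 1) →
      ((factorialCoeff ((mvPolynomialX ι ι ℤ).det ^ (p - 1)) e : ℤ) : ZMod p) = s) :
    ((factorialCoeff ((mvPolynomialX ι ι ℤ).det ^ (p - 1)) (K + Finsupp.single (a, c) 1) : ℤ) :
      ZMod p) = s := by
  set g := factorialCoeff ((mvPolynomialX ι ι ℤ).det ^ (p - 1))
  set N := K + Finsupp.single (c, c) 1
  set E := fun j => N - Finsupp.single (c, j) 1 + Finsupp.single (a, j) 1
  have hp := (Fact.out : p.Prime).two_le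
  have hrel : ∑ j, (N (c, j) : ZMod p) * g (E j) = 0 := by
    exact_mod_cast congrArg (Int.cast : ℤ → ZMod p) (sum_factorialCoeff_det_pow_eq_zero hac _ N)
  have hrowN : ∑ j, (N (c, j) : ZMod p) = 0 := by
    rw [← Nat.cast_sum, hd.sum_add_single_diag_row hac, Nat.sub_add_cancel (by omega),
      ZMod.natCast_self]
  have hterm : ∀ j ≠ c, (N (c, j) : ZMod p) * (g (E j) - s) = 0 := by
    intro j hj
    by_cases hN : N (c, j) = 0
    · simp [hN]
    obtain ⟨K', hK'⟩ := exists_add_single_eq hN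
    have hE : E j = K' + Finsupp.single (a, j) 1 := by simp only [E, ← hK', add_tsub_cancel_right]
    rw [ih _ (hE ▸ hd.move hK'.symm) (hE ▸ offDiag_move hac hj hK'.symm), sub_self, mul_zero]
  have key : (N (c, c) : ZMod p) * (g (K + Finsupp.single (a, c) 1) - s) = 0 := by
    have hEc : E c = K + Finsupp.single (a, c) 1 := by simp only [E, N, add_tsub_cancel_right]
    calc _ = ∑ j, (N (c, j) : ZMod p) * (g (E j) - s) := by
          rw [sum_eq_single c (fun j _ hj => hterm j hj) (by simp), hEc]
      _ = ∑ j, (N (c, j) : ZMod p) * g (E j) - (∑ j, (N (c, j) : ZMod p)) * s := by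
          simp only [mul_sub, sum_sub_distrib, sum_mul]
      _ = 0 := by rw [hrel, hrowN, zero_mul, sub_zero]
  have hNcc : (N (c, c) : ZMod p) ≠ 0 := by
    have hpos : 0 < N (c, c) := by simp [N]
    rw [Ne, ZMod.natCast_eq_zero_iff]
    exact fun hdvd => by
      have := Nat.le_of_dvd hpos hdvd
      have : N (c, c) ≤ p - 1 := hd.add_single_diag_apply_le
      omega
  exact sub_eq_zero.mp ((mul_eq_zero.mp key).resolve_left hNcc)

theorem factorialCoeff_det_pow_prime_sub_one {p : ℕ} [Fact p.Prime] {d : ι × ι →₀ ℕ}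
    (hd : IsBalanced (p - 1) d) :
    ((factorialCoeff ((mvPolynomialX ι ι ℤ).det ^ (p - 1)) d : ℤ) : ZMod p)
      = (-1) ^ Fintype.card ι := by
  induction hk : offDiag d using Nat.strong_induction_on generalizing d with
  | _ k ih =>
  rcases eq_or_ne k 0 with rfl | hk0
  · rw [factorialCoeff_det_pow_of_offDiag_eq_zero (R := ℤ) hd hk]
    push_cast
    rw [ZMod.wilsons_lemma]
  · obtain ⟨⟨a, c⟩, hac, hx⟩ := exists_apply_ne_zero_of_offDiag_ne_zero (hk ▸ hk0)
    obtain ⟨K, rfl⟩ := exists_add_single_eq hx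
    exact factorialCoeff_det_pow_eq_of_forall_offDiag_lt _ hac hd
      fun e he hlt => ih _ (hk ▸ hlt) he rfl

end Congruence

end Glynn

theorem glynn_congruence_general (p n : ℕ) (hp : p.Prime)
    (L : Matrix (Fin n) (Fin n) ℕ)
    (hrow : ∀ i, ∑ j, L i j = p - 1)
    (hcol : ∀ j, ∑ i, L i j = p - 1) :
    ((∏ i, ∏ j, (L i j).factorial : ℕ) : ℤ) * coeffC n (p - 1) L
      ≡ (-1) ^ n [ZMOD p] := by
  have := Fact.mk hp
  set d : Fin n × Fin n →₀ ℕ := Finsupp.equivFunOnFinite.symm fun x => L x.1 x.2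
  have hd : Glynn.IsBalanced (p - 1) d := fun i =>
    ⟨(Glynn.rowSums_apply d i).trans (hrow i), (Glynn.colSums_apply d i).trans (hcol i)⟩
  have hfac : ∏ i, ∏ j, (L i j).factorial = Glynn.factorial d := by
    rw [Glynn.factorial, Fintype.prod_prod_type]
    rfl
  have key := Glynn.factorialCoeff_det_pow_prime_sub_one hd
  rw [Fintype.card_fin] at key
  rw [← ZMod.intCast_eq_intCast_iff, hfac, Int.cast_pow, Int.cast_neg, Int.cast_one, ← key]
  rfl

theorem glynn_congruence (p n : ℕ) (hp : p.Prime) (hn : 1 ≤ n)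
    (L : Matrix (Fin n) (Fin n) ℕ)
    (hrow : ∀ i, ∑ j, L i j = p - 1)
    (hcol : ∀ j, ∑ i, L i j = p - 1) :
    ((∏ i, ∏ j, (L i j).factorial : ℕ) : ℤ) * coeffC n (p - 1) L
      ≡ (-1) ^ n [ZMOD p] :=
  glynn_congruence_general p n hp L hrow hcol
end

section
/- Let n ≥ 3 and let m be a natural number (m ≥ 1) such that there is no prime p with m = p - 1 (equivalently, m + 1 is not prime). Then there exists a matrix L ∈ Ψ(m) with C_L = 0, i.e., the coefficient of the monomial x^L in (det X)^m vanishes. -/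
/-!
Expanding `(det X)^m` by the multinomial theorem, `C_L` is a signed sum of multinomial
coefficients, one for each way `k` of writing `L` as a sum of `m` permutation matrices.
On a `3 × 3` block the permutation matrices satisfy exactly one linear relation,
`∑ even P_σ = ∑ odd P_σ`, so such a decomposition is unique up to adding multiples of the sign
character. Write `m + 1 = (p + 2)(q + 2)` and take for `L` the `3 × 3` block with multiplicities
`0, p, q` on the even and `1, pq+p+q+1, 1` on the odd permutations, completed by `m` on the
remaining diagonal. Its only other decomposition has multiplicities `1, p+1, q+1` and
`0, pq+p+q, 0`. The two terms have opposite signs, and equal multinomial coefficients because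
`p! q! (pq+p+q+1)! = (p+1)! (q+1)! (pq+p+q)!`, so they cancel.
-/

namespace DetPow

open Equiv Finset MvPolynomial

section PermSum

variable {ι : Type*} [Fintype ι] [DecidableEq ι]

noncomputable def permExponent (σ : Perm ι) : ι × ι →₀ ℕ :=
  ∑ j, Finsupp.single (σ j, j) 1

noncomputable def permSum (k : Perm ι → ℕ) : ι × ι →₀ ℕ :=
  ∑ σ, k σ • permExponent σ

lemma permExponent_apply (σ : Perm ι) (i j : ι) :
    permExponent σ (i, j) = if σ j = i then 1 else 0 := by
  rw [permExponent, Finsupp.finsetSum_apply, Finset.sum_eq_single j] <;>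
    simp_all [Finsupp.single_apply, Prod.ext_iff]

lemma permSum_apply (k : Perm ι → ℕ) (i j : ι) :
    permSum k (i, j) = ∑ σ, if σ j = i then k σ else 0 := by
  simp [permSum, permExponent_apply]

lemma sum_permSum_row (k : Perm ι → ℕ) (i : ι) : ∑ j, permSum k (i, j) = ∑ σ, k σ := by
  simp_rw [permSum_apply]
  rw [Finset.sum_comm]
  refine Finset.sum_congr rfl fun σ _ => ?_
  rw [← σ.symm.sum_comp]
  simp

lemma sum_permSum_col (k : Perm ι → ℕ) (j : ι) : ∑ i, permSum k (i, j) = ∑ σ, k σ := by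
  simp_rw [permSum_apply]
  rw [Finset.sum_comm]
  simp

lemma le_permSum_apply (k : Perm ι → ℕ) (σ : Perm ι) (j : ι) :
    k σ ≤ permSum k (σ j, j) := by
  rw [permSum_apply]
  simpa using Finset.single_le_sum (f := fun τ => if τ j = σ j then k τ else 0)
    (fun τ _ => Nat.zero_le _) (Finset.mem_univ σ)

variable {R : Type*} [CommRing R]

lemma det_of_X : (Matrix.of fun i j : ι => (X (i, j) : MvPolynomial (ι × ι) R)).det =
    ∑ σ : Perm ι, monomial (permExponent σ) (Perm.sign σ : R) := by
  rw [Matrix.det_apply]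
  refine Finset.sum_congr rfl fun σ _ => ?_
  rw [permExponent, monomial_sum_index, Units.smul_def, zsmul_eq_mul, map_intCast]
  rfl

lemma coeff_det_of_X_pow (L : ι × ι →₀ ℕ) (m : ℕ) :
    coeff L ((Matrix.of fun i j : ι => (X (i, j) : MvPolynomial (ι × ι) R)).det ^ m) =
      ∑ k ∈ (piAntidiag univ m).filter (permSum · = L),
        Nat.multinomial univ k * ∏ σ, (Perm.sign σ : R) ^ k σ := by
  rw [det_of_X, Finset.sum_pow_eq_sum_piAntidiag, coeff_sum, Finset.sum_filter]
  refine Finset.sum_congr rfl fun k _ => ?_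
  simp_rw [monomial_pow, ← monomial_sum_prod, ← C_eq_coe_nat, C_mul_monomial, coeff_monomial]
  rfl

end PermSum

section ExtendCount

variable {α β : Type*} {P : β → Prop} [DecidablePred P] (e : α ≃ Subtype P)

lemma exists_extendDomain_eq [Fintype β] [DecidableEq β] {σ : Perm β}
    (hσ : ∀ x, ¬ P x → σ x = x) : ∃ τ : Perm α, τ.extendDomain e = σ := by
  obtain ⟨g, rfl⟩ := Perm.mem_range_ofSubtype_iff.2 fun x hx =>
    by_contra fun h => Perm.mem_support.1 hx (hσ x h)
  refine ⟨e.permCongr.symm g, ?_⟩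
  ext x
  by_cases hx : P x
  · simp [Perm.extendDomain_apply_subtype _ _ hx, Perm.ofSubtype_apply_of_mem _ hx]
  · simp [Perm.extendDomain_apply_not_subtype _ _ hx, Perm.ofSubtype_apply_of_not_mem _ hx]

noncomputable def extendCount (k : Perm α → ℕ) : Perm β → ℕ :=
  Function.extend (Perm.extendDomainHom e) k 0

variable {e}

@[simp] lemma extendCount_extendDomain (k : Perm α → ℕ) (τ : Perm α) :
    extendCount e k (τ.extendDomain e) = k τ :=
  (Perm.extendDomainHom_injective e).extend_apply k 0 τ

lemma extendCount_of_forall_ne {k : Perm α → ℕ} {σ : Perm β}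
    (hσ : ∀ τ : Perm α, τ.extendDomain e ≠ σ) : extendCount e k σ = 0 :=
  Function.extend_apply' _ _ _ fun ⟨τ, h⟩ => hσ τ h

variable [Fintype α] [DecidableEq α] [Fintype β] [DecidableEq β]

lemma prod_comp_extendCount {M : Type*} [CommMonoid M] (k : Perm α → ℕ)
    (g : Perm β → ℕ → M) (hg : ∀ σ, g σ 0 = 1) :
    ∏ σ, g σ (extendCount e k σ) = ∏ τ, g (τ.extendDomain e) (k τ) := by
  rw [← Finset.prod_subset
    (Finset.subset_univ (univ.map ⟨_, Perm.extendDomainHom_injective e⟩)), Finset.prod_map]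
  · simp
  · intro σ _ hσ
    rw [extendCount_of_forall_ne fun τ h => hσ (Finset.mem_map.2 ⟨τ, mem_univ _, h⟩), hg]

lemma sum_comp_extendCount {M : Type*} [AddCommMonoid M] (k : Perm α → ℕ)
    (g : Perm β → ℕ → M) (hg : ∀ σ, g σ 0 = 0) :
    ∑ σ, g σ (extendCount e k σ) = ∑ τ, g (τ.extendDomain e) (k τ) :=
  prod_comp_extendCount (M := Multiplicative M) k g hg

lemma sum_extendCount (k : Perm α → ℕ) : ∑ σ, extendCount e k σ = ∑ τ, k τ :=
  sum_comp_extendCount k (fun _ n => n) fun _ => rfl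

lemma multinomial_extendCount (k : Perm α → ℕ) :
    Nat.multinomial univ (extendCount e k) = Nat.multinomial univ k := by
  simp only [Nat.multinomial]
  rw [sum_extendCount, prod_comp_extendCount k (fun _ n => n.factorial) fun _ => Nat.factorial_zero]

lemma prod_sign_pow_extendCount {R : Type*} [CommRing R] (k : Perm α → ℕ) :
    ∏ σ, (Perm.sign σ : R) ^ extendCount e k σ = ∏ τ, (Perm.sign τ : R) ^ k τ := by
  rw [prod_comp_extendCount k (fun σ n => (Perm.sign σ : R) ^ n) fun _ => pow_zero _]
  simp [Perm.sign_extendDomain]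

lemma permSum_extendCount_apply (k : Perm α → ℕ) (i j : β) :
    permSum (extendCount e k) (i, j) = ∑ τ, if τ.extendDomain e j = i then k τ else 0 := by
  rw [permSum_apply]
  exact sum_comp_extendCount k (fun σ n => if σ j = i then n else 0) fun _ => ite_self 0

lemma permSum_extendCount_apply_coe (k : Perm α → ℕ) (a b : α) :
    permSum (extendCount e k) (e a, e b) = permSum k (a, b) := by
  rw [permSum_extendCount_apply, permSum_apply]
  simp [Perm.extendDomain_apply_image, Subtype.val_inj]

lemma permSum_extendCount_apply_of_not_mem (k : Perm α → ℕ) (i : β) {j : β} (hj : ¬ P j) :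
    permSum (extendCount e k) (i, j) = if j = i then ∑ τ, k τ else 0 := by
  simp [permSum_extendCount_apply, Perm.extendDomain_apply_not_subtype _ _ hj]

lemma permSum_extendCount_apply_of_not_mem_of_mem (k : Perm α → ℕ) {i j : β} (hi : ¬ P i)
    (hj : P j) : permSum (extendCount e k) (i, j) = 0 := by
  rw [permSum_extendCount_apply]
  refine Finset.sum_eq_zero fun τ _ => if_neg fun h => hi ?_
  rw [← h, Perm.extendDomain_apply_subtype _ _ hj]
  exact Subtype.prop _

lemma permSum_extendCount_congr {k k' : Perm α → ℕ} (h : permSum k = permSum k')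
    (hs : ∑ τ, k τ = ∑ τ, k' τ) :
    permSum (extendCount e k) = permSum (extendCount e k') := by
  ext ⟨i, j⟩
  by_cases hj : P j
  · by_cases hi : P i
    · obtain ⟨a, ha⟩ := e.surjective ⟨i, hi⟩
      obtain ⟨b, hb⟩ := e.surjective ⟨j, hj⟩
      have key := permSum_extendCount_apply_coe (e := e) k a b
      rw [ha, hb] at key
      rw [key, h, ← permSum_extendCount_apply_coe (e := e), ha, hb]
    · rw [permSum_extendCount_apply_of_not_mem_of_mem _ hi hj,
        permSum_extendCount_apply_of_not_mem_of_mem _ hi hj]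
  · rw [permSum_extendCount_apply_of_not_mem _ _ hj, permSum_extendCount_apply_of_not_mem _ _ hj,
      hs]

lemma exists_eq_extendCount_of_permSum_eq {K : Perm β → ℕ} {k : Perm α → ℕ}
    (h : permSum K = permSum (extendCount e k)) :
    ∃ k' : Perm α → ℕ, K = extendCount e k' ∧ permSum k' = permSum k := by
  have hsupp : ∀ σ, K σ ≠ 0 → ∃ τ : Perm α, τ.extendDomain e = σ := by
    refine fun σ hσ => exists_extendDomain_eq e fun x hx => by_contra fun hne => hσ ?_
    have := le_permSum_apply K σ x
    rwa [h, permSum_extendCount_apply_of_not_mem _ _ hx, if_neg (Ne.symm hne),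
      Nat.le_zero] at this
  have hK : K = extendCount e (fun τ => K (τ.extendDomain e)) := by
    funext σ
    by_cases hσ : ∃ τ : Perm α, τ.extendDomain e = σ
    · obtain ⟨τ, rfl⟩ := hσ
      rw [extendCount_extendDomain]
    · simp only [not_exists] at hσ
      rw [extendCount_of_forall_ne hσ]
      by_contra hne
      obtain ⟨τ, hτ⟩ := hsupp σ hne
      exact hσ τ hτ
  refine ⟨_, hK, ?_⟩
  ext ⟨a, b⟩
  rw [← permSum_extendCount_apply_coe (e := e), ← hK, h, permSum_extendCount_apply_coe]

end ExtendCount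

section FinThree

lemma univ_perm_fin_three : (univ : Finset (Perm (Fin 3))) =
    {1, finRotate 3, (finRotate 3)⁻¹, swap 0 1, swap 0 2, swap 1 2} := by
  decide

lemma perm_fin_three_cases (σ : Perm (Fin 3)) :
    σ = 1 ∨ σ = finRotate 3 ∨ σ = (finRotate 3)⁻¹ ∨ σ = swap 0 1 ∨ σ = swap 0 2 ∨
      σ = swap 1 2 := by
  simpa [univ_perm_fin_three] using mem_univ σ

lemma sum_perm_fin_three {M : Type*} [AddCommMonoid M] (f : Perm (Fin 3) → M) :
    ∑ σ, f σ = f 1 + f (finRotate 3) + f (finRotate 3)⁻¹ + f (swap 0 1) + f (swap 0 2) +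
      f (swap 1 2) := by
  rw [univ_perm_fin_three]
  simp +decide [add_assoc]

lemma prod_perm_fin_three {M : Type*} [CommMonoid M] (f : Perm (Fin 3) → M) :
    ∏ σ, f σ = f 1 * f (finRotate 3) * f (finRotate 3)⁻¹ * f (swap 0 1) * f (swap 0 2) *
      f (swap 1 2) := by
  rw [univ_perm_fin_three]
  simp +decide [mul_assoc]

lemma sub_eq_sign_mul_of_permSum_eq {k k' : Perm (Fin 3) → ℕ} (h : permSum k = permSum k')
    (σ : Perm (Fin 3)) : (k σ : ℤ) - k' σ = Perm.sign σ * ((k 1 : ℤ) - k' 1) := by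
  -- five entries of the block already determine `k` up to multiples of the sign character
  have entry := fun i j => congrArg (· (i, j)) h
  simp only [permSum_apply, sum_perm_fin_three] at entry
  have e00 := entry 0 0
  have e11 := entry 1 1
  have e22 := entry 2 2
  have e10 := entry 1 0
  have e20 := entry 2 0
  simp +decide at e00 e11 e22 e10 e20
  rcases perm_fin_three_cases σ with rfl | rfl | rfl | rfl | rfl | rfl <;> simp +decide <;> omega

variable (p q : ℕ)

def decomp₀ (σ : Perm (Fin 3)) : ℕ :=
  if σ = finRotate 3 then p else if σ = (finRotate 3)⁻¹ then q
  else if σ = swap 0 2 then p * q + p + q + 1 else if σ = swap 0 1 ∨ σ = swap 1 2 then 1 else 0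

def decomp₁ (σ : Perm (Fin 3)) : ℕ :=
  if σ = 1 then 1 else if σ = finRotate 3 then p + 1 else if σ = (finRotate 3)⁻¹ then q + 1
  else if σ = swap 0 2 then p * q + p + q else 0

lemma sum_decomp₀ : ∑ σ, decomp₀ p q σ = p * q + 2 * p + 2 * q + 3 := by
  simp +decide [sum_perm_fin_three, decomp₀]
  ring

lemma sum_decomp₁ : ∑ σ, decomp₁ p q σ = p * q + 2 * p + 2 * q + 3 := by
  simp +decide [sum_perm_fin_three, decomp₁]
  ring

lemma permSum_decomp₁ : permSum (decomp₁ p q) = permSum (decomp₀ p q) := by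
  ext ⟨i, j⟩
  simp only [permSum_apply, sum_perm_fin_three]
  fin_cases i <;> fin_cases j <;> simp +decide [decomp₀, decomp₁] <;> ring

lemma eq_decomp_of_permSum_eq {k : Perm (Fin 3) → ℕ} (h : permSum k = permSum (decomp₀ p q)) :
    k = decomp₀ p q ∨ k = decomp₁ p q := by
  have hk := sub_eq_sign_mul_of_permSum_eq h
  -- `k = decomp₀ + k 1 • sign`, and `decomp₀ (swap 0 1) = 1` forces `k 1 ≤ 1`
  have h01 := hk (swap 0 1)
  simp +decide [decomp₀] at h01
  obtain h1 | h1 : k 1 = 0 ∨ k 1 = 1 := by omega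
  on_goal 1 => left
  on_goal 2 => right
  all_goals
    funext σ
    have hσ := hk σ
    rcases perm_fin_three_cases σ with rfl | rfl | rfl | rfl | rfl | rfl <;>
      simp +decide [decomp₀, decomp₁] at hσ ⊢ <;> omega

lemma multinomial_decomp₁ :
    Nat.multinomial univ (decomp₁ p q) = Nat.multinomial univ (decomp₀ p q) := by
  simp only [Nat.multinomial, sum_decomp₀, sum_decomp₁, prod_perm_fin_three]
  simp +decide [decomp₀, decomp₁]
  congr 1
  rw [Nat.factorial_succ p, Nat.factorial_succ q, Nat.factorial_succ (p * q + p + q)]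
  ring

lemma prod_sign_pow_decomp₁ {R : Type*} [CommRing R] :
    ∏ σ, (Perm.sign σ : R) ^ decomp₁ p q σ =
      -∏ σ, (Perm.sign σ : R) ^ decomp₀ p q σ := by
  simp +decide [prod_perm_fin_three, decomp₀, decomp₁, pow_succ]

end FinThree

section Witness

variable {β : Type*} {P : β → Prop} [DecidablePred P] (e : Fin 3 ≃ Subtype P) (p q : ℕ)

lemma extendCount_decomp₀_ne_decomp₁ :
    extendCount e (decomp₀ p q) ≠ extendCount e (decomp₁ p q) :=
  fun h => by
    have h1 := congrFun h ((1 : Perm (Fin 3)).extendDomain e)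
    simp only [extendCount_extendDomain] at h1
    simp +decide [decomp₀, decomp₁] at h1

variable [Fintype β] [DecidableEq β]

lemma filter_permSum_eq_permSum_extendCount_decomp₀ :
    (piAntidiag univ (p * q + 2 * p + 2 * q + 3)).filter
        (permSum · = permSum (extendCount e (decomp₀ p q))) =
      {extendCount e (decomp₀ p q), extendCount e (decomp₁ p q)} := by
  ext K
  simp only [mem_filter, mem_piAntidiag, mem_insert, mem_singleton, mem_univ, implies_true,
    and_true]
  constructor
  · rintro ⟨-, h⟩
    obtain ⟨k, rfl, hk⟩ := exists_eq_extendCount_of_permSum_eq h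
    rcases eq_decomp_of_permSum_eq p q hk with rfl | rfl
    exacts [Or.inl rfl, Or.inr rfl]
  · rintro (rfl | rfl)
    · exact ⟨(sum_extendCount _).trans (sum_decomp₀ p q), rfl⟩
    · exact ⟨(sum_extendCount _).trans (sum_decomp₁ p q), permSum_extendCount_congr
        (permSum_decomp₁ p q) ((sum_decomp₁ p q).trans (sum_decomp₀ p q).symm)⟩

lemma coeff_det_of_X_pow_permSum_extendCount_decomp₀ :
    coeff (permSum (extendCount e (decomp₀ p q)))
      ((Matrix.of fun i j : β => (X (i, j) : MvPolynomial (β × β) ℤ)).det ^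
        (p * q + 2 * p + 2 * q + 3)) = 0 := by
  rw [coeff_det_of_X_pow, filter_permSum_eq_permSum_extendCount_decomp₀,
    sum_pair (extendCount_decomp₀_ne_decomp₁ e p q), multinomial_extendCount,
    multinomial_extendCount, prod_sign_pow_extendCount, prod_sign_pow_extendCount,
    multinomial_decomp₁, prod_sign_pow_decomp₁]
  ring

end Witness

lemma exists_eq_of_not_prime_succ {m : ℕ} (hm : 1 ≤ m) (h : ¬ (m + 1).Prime) :
    ∃ p q, m = p * q + 2 * p + 2 * q + 3 := by
  obtain ⟨a, b, ha, hb, hab⟩ := (Nat.not_prime_iff_exists_mul_eq (by omega)).1 h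
  have ha2 : 2 ≤ a := by
    by_contra! ha1
    interval_cases a <;> omega
  have hb2 : 2 ≤ b := by
    by_contra! hb1
    interval_cases b <;> omega
  obtain ⟨p, rfl⟩ := Nat.exists_eq_add_of_le' ha2
  obtain ⟨q, rfl⟩ := Nat.exists_eq_add_of_le' hb2
  exact ⟨p, q, by linarith⟩

end DetPow

open DetPow

theorem exists_zero_coeff (n m : ℕ) (hn : 3 ≤ n) (hm : 1 ≤ m)
    (h : ¬ ∃ p : ℕ, p.Prime ∧ m = p - 1) :
    ∃ L : Matrix (Fin n) (Fin n) ℕ,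
      (∀ i, ∑ j, L i j = m) ∧ (∀ j, ∑ i, L i j = m) ∧ coeffC n m L = 0 := by
  obtain ⟨p, q, rfl⟩ := exists_eq_of_not_prime_succ hm fun hp => h ⟨_, hp, rfl⟩
  set K := extendCount (Fin.castLEquiv hn) (decomp₀ p q)
  have hsum : ∑ σ, K σ = p * q + 2 * p + 2 * q + 3 :=
    (sum_extendCount _).trans (sum_decomp₀ p q)
  refine ⟨fun i j => permSum K (i, j), fun i => ?_, fun j => ?_, ?_⟩
  · rw [sum_permSum_row, hsum]
  · rw [sum_permSum_col, hsum]
  · have hL : Finsupp.equivFunOnFinite.symm (fun x : Fin n × Fin n => permSum K (x.1, x.2)) =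
        permSum K := by
      ext
      simp
    unfold coeffC
    rw [hL, coeff_det_of_X_pow_permSum_extendCount_decomp₀]
end

section
/- If n is an odd number greater than 1, then the number of even Latin squares of order n equals the number of odd Latin squares of order n: els(n) = ols(n). -/
/-- `A : Fin n → Fin n → Fin n` is a Latin square if every row and every column
is a bijection of `Fin n` (each symbol occurs exactly once in each row and column). -/
def IsLatin {n : ℕ} (A : Fin n → Fin n → Fin n) : Prop :=
  (∀ i, Function.Bijective (A i)) ∧ (∀ j, Function.Bijective fun i => A i j)

/-- The sign of a Latin square: the product of the signs of its `n` row
permutations and its `n` column permutations. -/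
noncomputable def latinSign {n : ℕ} (A : Fin n → Fin n → Fin n) (h : IsLatin A) : ℤˣ :=
  (∏ i, Equiv.Perm.sign (Equiv.ofBijective (A i) (h.1 i))) *
  (∏ j, Equiv.Perm.sign (Equiv.ofBijective (fun i => A i j) (h.2 j)))

/-- The number of even Latin squares of order `n`. -/
noncomputable def els (n : ℕ) : ℕ :=
  Nat.card {A : Fin n → Fin n → Fin n // ∃ h : IsLatin A, latinSign A h = 1}

/-- The number of odd Latin squares of order `n`. -/
noncomputable def ols (n : ℕ) : ℕ :=
  Nat.card {A : Fin n → Fin n → Fin n // ∃ h : IsLatin A, latinSign A h = -1}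

/-! Permuting the rows of a Latin square by `σ` only reorders its row permutations and composes
each of its `n` column permutations with `σ`, so it multiplies the sign by `sign σ ^ n`. For odd
`n > 1` a transposition of two rows therefore maps even squares bijectively onto odd ones. -/

open Equiv Equiv.Perm

section

variable {n : ℕ} {A : Fin n → Fin n → Fin n}

theorem IsLatin.comp_perm (h : IsLatin A) (σ : Perm (Fin n)) : IsLatin fun i => A (σ i) :=
  ⟨fun i => h.1 (σ i), fun j => (h.2 j).comp σ.bijective⟩

theorem isLatin_comp_perm_iff (σ : Perm (Fin n)) : IsLatin (fun i => A (σ i)) ↔ IsLatin A :=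
  ⟨fun h => by simpa using h.comp_perm σ⁻¹, fun h => h.comp_perm σ⟩

theorem latinSign_comp_perm (h : IsLatin A) (σ : Perm (Fin n)) :
    latinSign (fun i => A (σ i)) (h.comp_perm σ) = sign σ ^ n * latinSign A h := by
  have hrows : ∏ i, sign (ofBijective (A (σ i)) ((h.comp_perm σ).1 i)) =
      ∏ i, sign (ofBijective (A i) (h.1 i)) :=
    Fintype.prod_equiv σ _ _ fun _ => rfl
  have hcols : ∀ j, ofBijective (fun i => A (σ i) j) ((h.comp_perm σ).2 j) =
      ofBijective (fun i => A i j) (h.2 j) * σ :=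
    fun _ => Equiv.ext fun _ => rfl
  simp only [latinSign, hrows, hcols, map_mul, Finset.prod_mul_distrib, Finset.prod_const,
    Finset.card_univ, Fintype.card_fin]
  ac_rfl

def latinSquaresPermRowsEquiv (σ : Perm (Fin n)) (s : ℤˣ) :
    {A : Fin n → Fin n → Fin n // ∃ h : IsLatin A, latinSign A h = s} ≃
      {A : Fin n → Fin n → Fin n // ∃ h : IsLatin A, latinSign A h = sign σ ^ n * s} :=
  (σ.symm.arrowCongr (Equiv.refl _)).subtypeEquiv fun A => by
    constructor
    · rintro ⟨h, rfl⟩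
      exact ⟨h.comp_perm σ, latinSign_comp_perm h σ⟩
    · rintro ⟨hσ, hs⟩
      have h := (isLatin_comp_perm_iff σ).1 hσ
      exact ⟨h, mul_left_cancel ((latinSign_comp_perm h σ).symm.trans hs)⟩

end

theorem els_eq_ols_of_odd (n : ℕ) (hodd : Odd n) (hn : 1 < n) :
    els n = ols n := by
  let τ : Perm (Fin n) := swap ⟨0, by omega⟩ ⟨1, hn⟩
  have hτ : sign τ ^ n = -1 := by
    rw [sign_swap (by simp), hodd.neg_one_pow]
  have := Nat.card_congr (latinSquaresPermRowsEquiv τ 1)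
  rwa [hτ, mul_one] at this
end

section
/- Let n ≥ 1 and let J_n denote the n×n all-ones matrix, which belongs to Ψ(n). Then the coefficient C_{J_n} of the monomial ∏_{i,j} x_{ij} in (det X)^n satisfies C_{J_n} = (-1)^{n(n-1)/2} (els(n) - ols(n)), where els(n) and ols(n) are the numbers of even and odd Latin squares of order n. -/
/-!
Write `(det X)^n` as a product of `n` determinants and expand: the monomial `∏ x_{ij}` is
produced exactly by the `n`-tuples of permutations `σ_1, …, σ_n` whose array `A i j = σ_i j`
also has bijective columns, i.e. by the Latin squares, each with coefficient its row sign; so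
`C_{J_n} = ∑_A rowSign A`.

For a Latin square `A`, let `R (i, j) = (i, A i j)` and `C (i, j) = (A i j, j)`, and let `S` do
the same as `C` for the square `A'` obtained by inverting every row of `A`, which has the
symbols of `A` as columns and its columns as symbols. Then the coordinate swap of
`Fin n × Fin n`, of sign `(-1)^(n(n-1)/2)`, equals `S R C⁻¹`, so
`rowSign A · colSign A · colSign A' = (-1)^(n(n-1)/2)`. As `A ↦ A'` and `A ↦ Aᵀ` are involutions
of the Latin squares,
`els - ols = ∑ rowSign · colSign = (-1)^(n(n-1)/2) ∑ colSign A' = (-1)^(n(n-1)/2) ∑ rowSign`.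
-/

open Equiv Finset

theorem Equiv.Perm.sign_prodComm (α : Type*) [Fintype α] [DecidableEq α] :
    Perm.sign (prodComm α α : Perm (α × α)) =
      (-1) ^ (Fintype.card α * (Fintype.card α - 1) / 2) := by
  have hsq : (prodComm α α : Perm (α × α)) ^ 2 = 1 := by ext <;> rfl
  have hfix : Fintype.card (Function.fixedPoints (prodComm α α : Perm (α × α))) =
      Fintype.card α := by
    refine Fintype.card_congr
      { toFun := fun p => p.1.1
        invFun := fun a => ⟨(a, a), rfl⟩
        left_inv := fun ⟨(a, b), h⟩ => ?_
        right_inv := fun _ => rfl }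
    obtain rfl : b = a := congrArg Prod.fst h
    rfl
  rw [Perm.sign_of_pow_two_eq_one hsq, hfix, Fintype.card_prod, Nat.mul_sub_one]

theorem Int.sum_units_eq_card_sub_card {ι : Type*} [Fintype ι] (f : ι → ℤˣ) :
    ∑ i, (f i : ℤ) = Nat.card {i // f i = 1} - Nat.card {i // f i = -1} := by
  classical
  simp only [Nat.card_eq_fintype_card, Fintype.card_subtype, ← Finset.sum_boole,
    ← Finset.sum_sub_distrib]
  refine Finset.sum_congr rfl fun i _ => ?_
  rcases Int.units_eq_one_or (f i) with h | h <;> simp [h]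

section DetPow

variable {ι : Type*} [Fintype ι] [DecidableEq ι] {m : ℕ}

noncomputable def permExponent (g : Fin m → Perm ι) : ι × ι →₀ ℕ :=
  ∑ k, ∑ i, Finsupp.single (g k i, i) 1

theorem permExponent_apply (g : Fin m → Perm ι) (a b : ι) :
    permExponent g (a, b) = #{k | g k b = a} := by
  simp only [permExponent, Finsupp.finsetSum_apply, Finsupp.single_apply, Prod.mk.injEq]
  simp [and_comm, ite_and]

theorem permExponent_eq_one_iff (g : Fin m → Perm ι) :
    permExponent g = Finsupp.equivFunOnFinite.symm 1 ↔
      ∀ b, Function.Bijective fun k => g k b := by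
  simp only [Finsupp.ext_iff, Prod.forall, permExponent_apply, Finsupp.coe_equivFunOnFinite_symm,
    Pi.one_apply, Finset.card_eq_one_iff_existsUnique, Function.bijective_iff_existsUnique,
    Finset.mem_filter, Finset.mem_univ, true_and]
  exact forall_comm

theorem Matrix.coeff_det_mvPolynomialX_pow {R : Type*} [CommRing R] (e : ι × ι →₀ ℕ) :
    MvPolynomial.coeff e ((Matrix.mvPolynomialX ι ι R).det ^ m) =
      ∑ g : Fin m → Perm ι with permExponent g = e, (((∏ k, Perm.sign (g k) : ℤˣ) : ℤ) : R) := by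
  rw [Matrix.det_apply', ← Fin.prod_const, Finset.prod_univ_sum, MvPolynomial.coeff_sum,
    Finset.sum_filter]
  refine Finset.sum_congr rfl fun g _ => ?_
  have hX : ∏ k, ∏ i, (MvPolynomial.X (g k i, i) : MvPolynomial (ι × ι) R) =
      MvPolynomial.monomial (permExponent g) 1 := by
    simp only [permExponent, MvPolynomial.monomial_sum_one, MvPolynomial.X]
  have hsign : ∏ k, ((Perm.sign (g k) : ℤ) : MvPolynomial (ι × ι) R) =
      MvPolynomial.C (((∏ k, Perm.sign (g k) : ℤˣ) : ℤ) : R) := by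
    simp
  simp only [Matrix.mvPolynomialX_apply, Finset.prod_mul_distrib, hX, hsign,
    MvPolynomial.coeff_C_mul, MvPolynomial.coeff_monomial, mul_ite, mul_one, mul_zero]

end DetPow

abbrev LatinSquare (n : ℕ) := {A : Fin n → Fin n → Fin n // IsLatin A}

namespace LatinSquare

noncomputable section

variable {n : ℕ}

instance : Fintype (LatinSquare n) := Fintype.ofFinite _

variable (L : LatinSquare n)

def row (i : Fin n) : Perm (Fin n) := ofBijective (L.1 i) (L.2.1 i)

def col (j : Fin n) : Perm (Fin n) := ofBijective (fun i => L.1 i j) (L.2.2 j)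

def rowSign : ℤˣ := ∏ i, Perm.sign (L.row i)

def colSign : ℤˣ := ∏ j, Perm.sign (L.col j)

def transpose : LatinSquare n := ⟨fun i j => L.1 j i, L.2.2, L.2.1⟩

theorem transpose_involutive : Function.Involutive (transpose (n := n)) := fun _ => rfl

theorem injective_row_symm_apply (s : Fin n) :
    Function.Injective fun i => (L.row i).symm s := by
  intro i i' h
  refine (L.2.2 ((L.row i).symm s)).1 ?_
  change L.row i ((L.row i).symm s) = L.row i' ((L.row i).symm s)
  dsimp only at h
  rw [apply_symm_apply, h, apply_symm_apply]

def rowInverse : LatinSquare n :=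
  ⟨fun i s => (L.row i).symm s, fun i => (L.row i).symm.bijective,
    fun s => (L.injective_row_symm_apply s).bijective_of_finite⟩

theorem row_rowInverse (i : Fin n) : L.rowInverse.row i = (L.row i).symm :=
  Equiv.ext fun _ => rfl

theorem rowInverse_involutive : Function.Involutive (rowInverse (n := n)) := by
  intro L
  refine Subtype.ext (funext₂ fun i j => ?_)
  change (L.rowInverse.row i).symm j = L.1 i j
  rw [row_rowInverse, symm_symm]
  rfl

theorem prodComm_eq :
    (prodComm (Fin n) (Fin n) : Perm (Fin n × Fin n)) =
      prodCongrLeft L.rowInverse.col * prodCongrRight L.row * (prodCongrLeft L.col)⁻¹ := by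
  rw [eq_mul_inv_iff_mul_eq]
  ext ⟨i, j⟩ <;> simp [rowInverse, row, col]

theorem rowSign_mul_colSign_mul_colSign_rowInverse :
    L.rowSign * L.colSign * L.rowInverse.colSign = (-1) ^ (n * (n - 1) / 2) := by
  have h := congrArg Perm.sign L.prodComm_eq
  rw [Perm.sign_prodComm, Fintype.card_fin, map_mul, map_mul, map_inv,
    Perm.sign_prodCongrLeft, Perm.sign_prodCongrRight, Perm.sign_prodCongrLeft,
    Int.units_inv_eq_self] at h
  rw [h, rowSign, colSign, colSign]
  ac_rfl

theorem rowSign_mul_colSign_eq :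
    L.rowSign * L.colSign = (-1) ^ (n * (n - 1) / 2) * L.rowInverse.colSign := by
  rw [← rowSign_mul_colSign_mul_colSign_rowInverse, mul_assoc, Int.units_mul_self, mul_one]

def rowsEquiv :
    {g : Fin n → Perm (Fin n) // ∀ j, Function.Bijective fun i => g i j} ≃ LatinSquare n where
  toFun g := ⟨fun i j => g.1 i j, fun i => (g.1 i).bijective, g.2⟩
  invFun L := ⟨L.row, L.2.2⟩
  left_inv _ := Subtype.ext (funext fun _ => Equiv.ext fun _ => rfl)
  right_inv _ := rfl

theorem rowSign_rowsEquiv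
    (g : {g : Fin n → Perm (Fin n) // ∀ j, Function.Bijective fun i => g i j}) :
    (rowsEquiv g).rowSign = ∏ i, Perm.sign (g.1 i) :=
  Finset.prod_congr rfl fun _ _ => congrArg Perm.sign (Equiv.ext fun _ => rfl)

theorem sum_rowSign_mul_colSign :
    ∑ L : LatinSquare n, ((L.rowSign * L.colSign : ℤˣ) : ℤ) =
      (-1) ^ (n * (n - 1) / 2) * ∑ L : LatinSquare n, (L.rowSign : ℤ) := by
  have hcol : ∑ L : LatinSquare n, (L.rowInverse.colSign : ℤ) =
      ∑ L : LatinSquare n, (L.colSign : ℤ) :=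
    Equiv.sum_comp (rowInverse_involutive.toPerm _) fun L : LatinSquare n => (L.colSign : ℤ)
  have hrow : ∑ L : LatinSquare n, (L.colSign : ℤ) = ∑ L : LatinSquare n, (L.rowSign : ℤ) :=
    Equiv.sum_comp (transpose_involutive.toPerm _) fun L : LatinSquare n => (L.rowSign : ℤ)
  simp only [rowSign_mul_colSign_eq, Units.val_mul, Units.val_pow_eq_pow_val, Units.val_neg,
    Units.val_one, ← Finset.mul_sum, hcol, hrow]

end

end LatinSquare

theorem coeffC_allOnes_eq_sum_rowSign (n : ℕ) :
    coeffC n n (fun _ _ => 1) = ∑ L : LatinSquare n, (L.rowSign : ℤ) := by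
  classical
  refine (Matrix.coeff_det_mvPolynomialX_pow (m := n) (Finsupp.equivFunOnFinite.symm 1)).trans ?_
  simp_rw [permExponent_eq_one_iff]
  rw [Finset.sum_subtype _ fun g => Finset.mem_filter_univ g]
  exact Fintype.sum_equiv LatinSquare.rowsEquiv _ _ fun g => by
    rw [LatinSquare.rowSign_rowsEquiv, Units.coe_prod, Int.cast_id]

theorem els_sub_ols (n : ℕ) :
    (els n : ℤ) - ols n = ∑ L : LatinSquare n, ((L.rowSign * L.colSign : ℤˣ) : ℤ) := by
  rw [Int.sum_units_eq_card_sub_card, els, ols,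
    ← Nat.card_congr (subtypeSubtypeEquivSubtypeExists IsLatin
      fun L : LatinSquare n => latinSign L.1 L.2 = 1),
    ← Nat.card_congr (subtypeSubtypeEquivSubtypeExists IsLatin
      fun L : LatinSquare n => latinSign L.1 L.2 = -1)]
  rfl

theorem coeff_allOnes_eq_general (n : ℕ) :
    coeffC n n (fun _ _ => 1) = (-1) ^ (n * (n - 1) / 2) * ((els n : ℤ) - (ols n : ℤ)) := by
  rw [coeffC_allOnes_eq_sum_rowSign, els_sub_ols, LatinSquare.sum_rowSign_mul_colSign,
    ← mul_assoc, ← pow_add, ← two_mul, pow_mul, neg_one_sq, one_pow, one_mul]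

theorem coeff_allOnes_eq (n : ℕ) (hn : 1 ≤ n) :
    coeffC n n (fun _ _ => 1) = (-1) ^ (n * (n - 1) / 2) * ((els n : ℤ) - (ols n : ℤ)) :=
  coeff_allOnes_eq_general n
end

section
/- Let n ≥ 3, let a, b ≥ 1 be natural numbers, and set m = (a+1)(b+1) - 1 = ab + a + b. Let L_n(a,b) be the n×n matrix whose upper-left 3×3 block is L_3(a,b) = [[ab+b-1, a, 1], [a, ab, b], [1, b, ab+a-1]], whose remaining diagonal entries (positions (4,4) through (n,n)) all equal m, and whose other entries are 0. Then L_n(a,b) ∈ Ψ(m) and C_{L_n(a,b)} = 0. -/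
/-- The 3×3 matrix `L_3(a,b)`. -/
def L3 (a b : ℕ) : Matrix (Fin 3) (Fin 3) ℕ :=
  !![a * b + b - 1, a, 1;
     a, a * b, b;
     1, b, a * b + a - 1]

/-- The n×n matrix `L_n(a,b)`: upper-left 3×3 block `L_3(a,b)`, remaining diagonal
entries equal to `m = ab + a + b`, and all other entries `0`. -/
def Lmat (n a b : ℕ) : Matrix (Fin n) (Fin n) ℕ := fun i j =>
  if h : (i : ℕ) < 3 ∧ (j : ℕ) < 3 then L3 a b ⟨i, h.1⟩ ⟨j, h.2⟩
  else if i = j then a * b + a + b else 0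


/-!
Expanding `(det X) ^ m = (∑ σ, sign σ • ∏ i, x_{i, σ i}) ^ m` by the multinomial theorem, `C_L` is
the sum of `multinomial c * ∏ σ, sign σ ^ c σ` over all weightings `c` of the permutations of
total weight `m` with `∑ σ, c σ • P_σ = L`. A permutation moving an index outside the upper-left
`3 × 3` block would put weight on an off-diagonal zero of `L_n(a,b)`, so only permutations of the
block occur, and `L_3(a,b)` has exactly two such decompositions (`ρ` the 3-cycle):
`ab • 1 + P_ρ + P_ρ⁻¹ + (a - 1) • P_(0 1) + (b - 1) • P_(1 2)` and
`(ab - 1) • 1 + a • P_(0 1) + P_(0 2) + b • P_(1 2)`.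
Their multinomial coefficients agree since `(ab)! (a - 1)! (b - 1)! = (ab - 1)! a! b!`, while their
odd permutations carry total weight `a + b - 2` and `a + b + 1`, so the two terms cancel. Either
decomposition also writes `L_n(a,b)` as a sum of `m` permutation matrices, so `L_n(a,b) ∈ Ψ(m)`.
-/

open Equiv Finset MvPolynomial
open scoped Nat

section ExtendByZero

variable {α β M : Type*} [Fintype α] [Fintype β] [CommMonoid M] {f : α → β}

@[to_additive]
theorem Function.Injective.prod_comp_extend_zero (hf : f.Injective) {G : β → ℕ → M}
    (hG : ∀ b, G b 0 = 1) (w : α → ℕ) :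
    ∏ b, G b (Function.extend f w 0 b) = ∏ a, G (f a) (w a) := by
  classical
  rw [← prod_subset (subset_univ (univ.map ⟨f, hf⟩)) fun b _ hb => ?_, prod_map]
  · simp [hf.extend_apply]
  · rw [Function.extend_apply' _ _ _ (by simpa using hb), Pi.zero_apply, hG]

end ExtendByZero

section PermWeights

variable {ι : Type*} [Fintype ι]

noncomputable def matrixExponent : Matrix ι ι ℕ →+ (ι × ι →₀ ℕ) where
  toFun L := Finsupp.equivFunOnFinite.symm fun p => L p.1 p.2
  map_zero' := by ext; simp
  map_add' _ _ := by ext; simp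

theorem matrixExponent_injective : Function.Injective (matrixExponent (ι := ι)) := by
  intro L L' h
  ext i j
  simpa [matrixExponent] using DFunLike.congr_fun h (i, j)

variable [DecidableEq ι]

def permWeightMatrix (c : Perm ι → ℕ) : Matrix ι ι ℕ := ∑ σ, c σ • σ.permMatrix ℕ

def signedMultinomial (c : Perm ι → ℕ) : ℤ :=
  Nat.multinomial univ c * ∏ σ, (Perm.sign σ : ℤ) ^ c σ

theorem permWeightMatrix_apply (c : Perm ι → ℕ) (i j : ι) :
    permWeightMatrix c i j = ∑ σ, if σ i = j then c σ else 0 := by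
  simp only [permWeightMatrix, Matrix.sum_apply, Matrix.smul_apply, PEquiv.toMatrix_apply,
    toPEquiv_apply, Option.mem_def, Option.some.injEq, smul_eq_mul, mul_ite, mul_one, mul_zero]

theorem sum_permWeightMatrix_row (c : Perm ι → ℕ) (i : ι) :
    ∑ j, permWeightMatrix c i j = ∑ σ, c σ := by
  simp_rw [permWeightMatrix_apply]
  rw [sum_comm]
  simp

theorem sum_permWeightMatrix_col (c : Perm ι → ℕ) (j : ι) :
    ∑ i, permWeightMatrix c i j = ∑ σ, c σ := by
  simp_rw [permWeightMatrix_apply]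
  rw [sum_comm]
  refine sum_congr rfl fun σ _ => ?_
  simp [← σ.eq_symm_apply]

theorem sum_eq_of_permWeightMatrix_eq [Nonempty ι] {c c' : Perm ι → ℕ}
    (h : permWeightMatrix c = permWeightMatrix c') : ∑ σ, c σ = ∑ σ, c' σ := by
  obtain ⟨i⟩ := ‹Nonempty ι›
  rw [← sum_permWeightMatrix_row c i, h, sum_permWeightMatrix_row]

theorem le_permWeightMatrix_apply (c : Perm ι → ℕ) (σ : Perm ι) (i : ι) :
    c σ ≤ permWeightMatrix c i (σ i) := by
  rw [permWeightMatrix_apply]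
  simpa using single_le_sum (f := fun τ : Perm ι => if τ i = σ i then c τ else 0)
    (fun _ _ => Nat.zero_le _) (mem_univ σ)

variable {R : Type*} [CommRing R]

theorem det_X_eq_sum_monomial :
    (Matrix.of fun i j : ι => (X (i, j) : MvPolynomial (ι × ι) R)).det =
      ∑ σ : Perm ι, monomial (matrixExponent (σ.permMatrix ℕ)) ((Perm.sign σ : ℤ) : R) := by
  rw [← Matrix.det_transpose, Matrix.det_apply']
  refine sum_congr rfl fun σ _ => ?_
  have : matrixExponent (σ.permMatrix ℕ) = ∑ i, Finsupp.single (i, σ i) 1 := by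
    ext ⟨i, j⟩
    simp [matrixExponent, Finsupp.single_apply, PEquiv.toMatrix_apply, ite_and]
  rw [this, monomial_sum_index, ← map_intCast (C : R →+* MvPolynomial (ι × ι) R)]
  rfl

theorem coeff_det_X_pow (L : Matrix ι ι ℕ) (m : ℕ) :
    coeff (matrixExponent L)
        ((Matrix.of fun i j : ι => (X (i, j) : MvPolynomial (ι × ι) R)).det ^ m) =
      ∑ c ∈ piAntidiag univ m with permWeightMatrix c = L, (signedMultinomial c : R) := by
  rw [det_X_eq_sum_monomial, sum_pow_eq_sum_piAntidiag, coeff_sum, sum_filter]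
  refine sum_congr rfl fun c _ => ?_
  simp_rw [monomial_pow, ← monomial_sum_prod, ← map_nsmul, ← map_sum]
  rw [← C_eq_coe_nat, coeff_C_mul, coeff_monomial]
  simp only [matrixExponent_injective.eq_iff, ← permWeightMatrix.eq_def, signedMultinomial]
  split_ifs <;> push_cast <;> ring

end PermWeights

theorem coeffC_eq_sum_signedMultinomial (n m : ℕ) (L : Matrix (Fin n) (Fin n) ℕ) :
    coeffC n m L = ∑ c ∈ piAntidiag univ m with permWeightMatrix c = L, signedMultinomial c :=
  (coeff_det_X_pow L m).trans (by simp)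

section Block

variable {k n : ℕ} (h : k ≤ n)

def blockPerm : Perm (Fin k) →* Perm (Fin n) :=
  Perm.ofSubtype.comp (Fin.castLEquiv h).permCongrHom.toMonoidHom

theorem blockPerm_injective : Function.Injective (blockPerm h) :=
  Perm.ofSubtype_injective.comp (Fin.castLEquiv h).permCongrHom.injective

theorem sign_blockPerm (τ : Perm (Fin k)) : Perm.sign (blockPerm h τ) = Perm.sign τ := by
  simp [blockPerm, Perm.sign_ofSubtype, Perm.sign_permCongr]

theorem blockPerm_apply_of_lt (τ : Perm (Fin k)) {x : Fin n} (hx : (x : ℕ) < k) :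
    (blockPerm h τ x : ℕ) = τ ⟨x, hx⟩ := by
  rw [blockPerm, MonoidHom.comp_apply,
    Perm.ofSubtype_apply_of_mem (p := fun y : Fin n => (y : ℕ) < k) _ hx]
  rfl

theorem blockPerm_apply_of_le (τ : Perm (Fin k)) {x : Fin n} (hx : k ≤ (x : ℕ)) :
    blockPerm h τ x = x := by
  rw [blockPerm, MonoidHom.comp_apply,
    Perm.ofSubtype_apply_of_not_mem (p := fun y : Fin n => (y : ℕ) < k) _ (not_lt.2 hx)]

theorem exists_blockPerm_eq {σ : Perm (Fin n)} (hσ : ∀ x : Fin n, k ≤ (x : ℕ) → σ x = x) :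
    ∃ τ, blockPerm h τ = σ := by
  have hmem : ∀ x, (σ x : ℕ) < k ↔ (x : ℕ) < k := by
    intro x
    by_cases hx : (x : ℕ) < k
    · refine iff_of_true (not_le.1 fun hσx => ?_) hx
      rw [σ.injective (hσ _ hσx)] at hσx
      omega
    · rw [hσ x (not_lt.1 hx)]
  refine ⟨(Fin.castLEquiv h).permCongrHom.symm (σ.subtypePerm hmem), ?_⟩
  rw [blockPerm, MonoidHom.comp_apply, MulEquiv.coe_toMonoidHom, MulEquiv.apply_symm_apply,
    Perm.ofSubtype_subtypePerm]
  intro x hx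
  by_contra hlt
  exact hx (hσ x (not_lt.1 hlt))

theorem sum_extend_blockPerm (w : Perm (Fin k) → ℕ) :
    ∑ σ, Function.extend (blockPerm h) w 0 σ = ∑ τ, w τ :=
  (blockPerm_injective h).sum_comp_extend_zero (G := fun _ x => x) (fun _ => rfl) w

theorem signedMultinomial_extend_blockPerm (w : Perm (Fin k) → ℕ) :
    signedMultinomial (Function.extend (blockPerm h) w 0) = signedMultinomial w := by
  have hf := blockPerm_injective h
  rw [signedMultinomial, signedMultinomial, Nat.multinomial, Nat.multinomial,
    sum_extend_blockPerm, hf.prod_comp_extend_zero (G := fun _ x => x !) (fun _ => rfl),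
    hf.prod_comp_extend_zero (G := fun σ x => (Perm.sign σ : ℤ) ^ x) (fun _ => pow_zero _)]
  simp only [sign_blockPerm]

def padBlock {α : Type*} [Zero α] (A : Matrix (Fin k) (Fin k) α) (s : α) :
    Matrix (Fin n) (Fin n) α := fun i j =>
  if hij : (i : ℕ) < k ∧ (j : ℕ) < k then A ⟨i, hij.1⟩ ⟨j, hij.2⟩ else if i = j then s else 0

theorem permWeightMatrix_extend_blockPerm (w : Perm (Fin k) → ℕ) :
    permWeightMatrix (Function.extend (blockPerm h) w 0) =
      padBlock (permWeightMatrix w) (∑ τ, w τ) := by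
  ext i j
  rw [permWeightMatrix_apply, (blockPerm_injective h).sum_comp_extend_zero
    (G := fun σ c => if σ i = j then c else 0) (fun _ => ite_self 0), padBlock]
  split_ifs with hij hij'
  · rw [permWeightMatrix_apply]
    refine sum_congr rfl fun τ _ => ?_
    simp only [Fin.ext_iff, blockPerm_apply_of_lt h τ hij.1]
  · subst hij'
    have hi : k ≤ (i : ℕ) := by omega
    simp [blockPerm_apply_of_le h _ hi]
  · refine sum_eq_zero fun τ _ => if_neg fun hτ => ?_
    by_cases hi : (i : ℕ) < k
    · have := blockPerm_apply_of_lt h τ hi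
      rw [hτ] at this
      omega
    · exact hij' (hτ ▸ (blockPerm_apply_of_le h τ (not_lt.1 hi)).symm)

theorem exists_eq_extend_blockPerm {c : Perm (Fin n) → ℕ} {A : Matrix (Fin k) (Fin k) ℕ}
    {s : ℕ} (hc : permWeightMatrix c = padBlock A s) :
    ∃ w, permWeightMatrix w = A ∧ c = Function.extend (blockPerm h) w 0 := by
  have hsupp : ∀ σ, c σ ≠ 0 → ∃ τ, blockPerm h τ = σ := by
    refine fun σ hσ => exists_blockPerm_eq h fun x hx => ?_
    by_contra hne
    have := le_permWeightMatrix_apply c σ x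
    rw [hc, padBlock, dif_neg (by omega), if_neg (Ne.symm hne)] at this
    omega
  have hext : c = Function.extend (blockPerm h) (c ∘ blockPerm h) 0 := by
    funext σ
    by_cases hσ : ∃ τ, blockPerm h τ = σ
    · obtain ⟨τ, rfl⟩ := hσ
      exact ((blockPerm_injective h).extend_apply (c ∘ blockPerm h) 0 τ).symm
    · rw [Function.extend_apply' _ _ _ hσ]
      by_contra hne
      exact hσ (hsupp σ hne)
  refine ⟨c ∘ blockPerm h, ?_, hext⟩
  have hpad := permWeightMatrix_extend_blockPerm h (c ∘ blockPerm h)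
  rw [← hext, hc] at hpad
  ext i j
  simpa [padBlock] using (congrFun₂ hpad ⟨i, by omega⟩ ⟨j, by omega⟩).symm

end Block

section FinThree

@[to_additive]
theorem Fin.prod_perm_three {M : Type*} [CommMonoid M] (g : Perm (Fin 3) → M) :
    ∏ σ, g σ = g 1 * g (finRotate 3) * g (finRotate 3)⁻¹ * g (swap 0 1) * g (swap 0 2) *
      g (swap 1 2) := by
  have : (univ : Finset (Perm (Fin 3))) =
      {1, finRotate 3, (finRotate 3)⁻¹, swap 0 1, swap 0 2, swap 1 2} := by decide
  rw [this, prod_insert (by decide), prod_insert (by decide), prod_insert (by decide),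
    prod_insert (by decide), prod_pair (by decide)]
  simp only [mul_assoc]

theorem Fin.perm_three_ext_iff {w v : Perm (Fin 3) → ℕ} :
    w = v ↔ w 1 = v 1 ∧ w (finRotate 3) = v (finRotate 3) ∧
      w (finRotate 3)⁻¹ = v (finRotate 3)⁻¹ ∧ w (swap 0 1) = v (swap 0 1) ∧
      w (swap 0 2) = v (swap 0 2) ∧ w (swap 1 2) = v (swap 1 2) := by
  refine ⟨by rintro rfl; simp, fun hwv => funext fun σ => ?_⟩
  have : σ ∈ ({1, finRotate 3, (finRotate 3)⁻¹, swap 0 1, swap 0 2, swap 1 2} :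
    Finset (Perm (Fin 3))) := by revert σ; decide
  simp only [mem_insert, mem_singleton] at this
  rcases this with rfl | rfl | rfl | rfl | rfl | rfl <;> simp [hwv]

theorem permWeightMatrix_fin_three (w : Perm (Fin 3) → ℕ) :
    permWeightMatrix w =
      !![w 1 + w (swap 1 2), w (finRotate 3) + w (swap 0 1), w (finRotate 3)⁻¹ + w (swap 0 2);
         w (finRotate 3)⁻¹ + w (swap 0 1), w 1 + w (swap 0 2), w (finRotate 3) + w (swap 1 2);
         w (finRotate 3) + w (swap 0 2), w (finRotate 3)⁻¹ + w (swap 1 2), w 1 + w (swap 0 1)] := by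
  ext i j
  fin_cases i <;> fin_cases j <;> simp +decide [permWeightMatrix_apply, Fin.sum_perm_three]

def l3Decomp₀ (a b : ℕ) (σ : Perm (Fin 3)) : ℕ :=
  if σ = 1 then a * b else if σ = swap 0 1 then a - 1 else if σ = swap 1 2 then b - 1
  else if σ = swap 0 2 then 0 else 1

def l3Decomp₁ (a b : ℕ) (σ : Perm (Fin 3)) : ℕ :=
  if σ = 1 then a * b - 1 else if σ = swap 0 1 then a else if σ = swap 1 2 then b
  else if σ = swap 0 2 then 1 else 0

theorem l3Decomp₀_ne_l3Decomp₁ {a b : ℕ} : l3Decomp₀ a b ≠ l3Decomp₁ a b := fun h => by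
  simpa +decide [l3Decomp₀, l3Decomp₁] using congrFun h (finRotate 3)

variable {a b : ℕ}

theorem permWeightMatrix_eq_L3_iff (ha : 1 ≤ a) (hb : 1 ≤ b) (w : Perm (Fin 3) → ℕ) :
    permWeightMatrix w = L3 a b ↔ w = l3Decomp₀ a b ∨ w = l3Decomp₁ a b := by
  have hab : 1 ≤ a * b := Nat.one_le_iff_ne_zero.2 (by positivity)
  simp +decide [permWeightMatrix_fin_three, Fin.perm_three_ext_iff, l3Decomp₀, l3Decomp₁, L3]
  generalize a * b = P at *
  omega

theorem sum_eq_of_permWeightMatrix_eq_L3 (hb : 1 ≤ b) {w : Perm (Fin 3) → ℕ}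
    (hw : permWeightMatrix w = L3 a b) : ∑ σ, w σ = a * b + a + b := by
  rw [← sum_permWeightMatrix_row w 0, hw, Fin.sum_univ_three]
  change a * b + b - 1 + a + 1 = a * b + a + b
  omega

theorem multinomial_l3Decomp₀ (ha : 1 ≤ a) (hb : 1 ≤ b) :
    Nat.multinomial univ (l3Decomp₀ a b) = Nat.multinomial univ (l3Decomp₁ a b) := by
  obtain ⟨a, rfl⟩ := Nat.exists_eq_add_of_le' ha
  obtain ⟨b, rfl⟩ := Nat.exists_eq_add_of_le' hb
  obtain ⟨p, hp⟩ : ∃ p, (a + 1) * (b + 1) = p + 1 := ⟨a * b + a + b, by ring⟩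
  unfold Nat.multinomial
  congr 1
  · simp +decide [Fin.sum_perm_three, l3Decomp₀, l3Decomp₁, hp]
    ring_nf
  · simp +decide [Fin.prod_perm_three, l3Decomp₀, l3Decomp₁, hp, Nat.factorial_succ]
    rw [← hp]
    ring

theorem signedMultinomial_l3Decomp₀ (ha : 1 ≤ a) (hb : 1 ≤ b) :
    signedMultinomial (l3Decomp₀ a b) = -signedMultinomial (l3Decomp₁ a b) := by
  rw [signedMultinomial, signedMultinomial, multinomial_l3Decomp₀ ha hb]
  obtain ⟨a, rfl⟩ := Nat.exists_eq_add_of_le' ha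
  obtain ⟨b, rfl⟩ := Nat.exists_eq_add_of_le' hb
  simp +decide [Fin.prod_perm_three, l3Decomp₀, l3Decomp₁, pow_succ]

end FinThree

section Lmat

variable {n a b : ℕ} (hn : 3 ≤ n) (ha : 1 ≤ a) (hb : 1 ≤ b)
include hn ha hb

theorem permWeightMatrix_eq_Lmat_iff (c : Perm (Fin n) → ℕ) :
    permWeightMatrix c = Lmat n a b ↔
      c = Function.extend (blockPerm hn) (l3Decomp₀ a b) 0 ∨
        c = Function.extend (blockPerm hn) (l3Decomp₁ a b) 0 := by
  have hL : Lmat n a b = padBlock (L3 a b) (a * b + a + b) := rfl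
  constructor
  · intro hc
    obtain ⟨w, hw, rfl⟩ := exists_eq_extend_blockPerm hn (hc.trans hL)
    rcases (permWeightMatrix_eq_L3_iff ha hb w).1 hw with rfl | rfl
    exacts [Or.inl rfl, Or.inr rfl]
  · intro hc
    obtain ⟨w, hw, rfl⟩ : ∃ w, permWeightMatrix w = L3 a b ∧
        c = Function.extend (blockPerm hn) w 0 := by
      rcases hc with rfl | rfl
      exacts [⟨_, (permWeightMatrix_eq_L3_iff ha hb _).2 (Or.inl rfl), rfl⟩,
        ⟨_, (permWeightMatrix_eq_L3_iff ha hb _).2 (Or.inr rfl), rfl⟩]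
    rw [permWeightMatrix_extend_blockPerm, hw, sum_eq_of_permWeightMatrix_eq_L3 hb hw, hL]

theorem exists_permWeightMatrix_eq_Lmat :
    ∃ c : Perm (Fin n) → ℕ, permWeightMatrix c = Lmat n a b ∧ ∑ σ, c σ = a * b + a + b :=
  ⟨_, (permWeightMatrix_eq_Lmat_iff hn ha hb _).2 (Or.inl rfl), by
    rw [sum_extend_blockPerm, sum_eq_of_permWeightMatrix_eq_L3 hb
      ((permWeightMatrix_eq_L3_iff ha hb _).2 (Or.inl rfl))]⟩

theorem filter_permWeightMatrix_eq_Lmat :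
    {c ∈ piAntidiag (univ : Finset (Perm (Fin n))) (a * b + a + b) |
        permWeightMatrix c = Lmat n a b} =
      {Function.extend (blockPerm hn) (l3Decomp₀ a b) 0,
        Function.extend (blockPerm hn) (l3Decomp₁ a b) 0} := by
  obtain ⟨c₀, hc₀, hsum⟩ := exists_permWeightMatrix_eq_Lmat hn ha hb
  ext c
  simp only [mem_filter, mem_piAntidiag, mem_univ, implies_true, and_true, mem_insert,
    mem_singleton, ← permWeightMatrix_eq_Lmat_iff hn ha hb]
  have : Nonempty (Fin n) := ⟨⟨0, by omega⟩⟩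
  exact and_iff_right_of_imp fun hc => hsum ▸ sum_eq_of_permWeightMatrix_eq (hc.trans hc₀.symm)

end Lmat

theorem Lmat_mem_Psi_and_coeff_zero (n a b : ℕ) (hn : 3 ≤ n) (ha : 1 ≤ a) (hb : 1 ≤ b)
    (m : ℕ) (hm : m = (a + 1) * (b + 1) - 1) :
    (∀ i, ∑ j, Lmat n a b i j = m) ∧ (∀ j, ∑ i, Lmat n a b i j = m) ∧
      coeffC n m (Lmat n a b) = 0 := by
  obtain rfl : m = a * b + a + b := by rw [hm, add_one_mul, mul_add_one]; omega
  obtain ⟨c, hc, hsum⟩ := exists_permWeightMatrix_eq_Lmat hn ha hb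
  refine ⟨fun i => by rw [← hc, sum_permWeightMatrix_row, hsum],
    fun j => by rw [← hc, sum_permWeightMatrix_col, hsum], ?_⟩
  have hne : Function.extend (blockPerm hn) (l3Decomp₀ a b) 0 ≠
      Function.extend (blockPerm hn) (l3Decomp₁ a b) 0 :=
    (Function.extend_injective (blockPerm_injective hn) 0).ne l3Decomp₀_ne_l3Decomp₁
  rw [coeffC_eq_sum_signedMultinomial, filter_permWeightMatrix_eq_Lmat hn ha hb, sum_pair hne,
    signedMultinomial_extend_blockPerm, signedMultinomial_extend_blockPerm,
    signedMultinomial_l3Decomp₀ ha hb, neg_add_cancel]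
end

section
/- Let a, b ≥ 1 be natural numbers. Then the only 6-tuples (k₁,k₂,k₃,l₁,l₂,l₃) of nonnegative integers satisfying the nine equations k₁+l₂ = ab+b-1, k₂+l₁ = a, k₃+l₃ = 1, k₃+l₁ = a, k₁+l₃ = ab, k₂+l₂ = b, k₂+l₃ = 1, k₃+l₂ = b, k₁+l₁ = ab+a-1 are (k₁,k₂,k₃,l₁,l₂,l₃) = (ab-1, 0, 0, a, b, 1) and (k₁,k₂,k₃,l₁,l₂,l₃) = (ab, 1, 1, a-1, b-1, 0). -/
/-! Subtracting `k₂ + l₃ = 1` from `k₃ + l₃ = 1` gives `k₂ = k₃`, and `k₂ + l₃ = 1` leaves only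
`(k₂, l₃) = (0, 1)` or `(1, 0)`. In either case the remaining equations determine `l₁ = a - k₂`,
`l₂ = b - k₂` and `k₁ = ab - l₃`. Conversely both tuples solve the system, because
`1 ≤ a, b ≤ ab` makes the truncated subtractions in `ab - 1`, `a - 1`, `b - 1` exact. -/

theorem solutions_of_linear_system (a b : ℕ) (ha : 1 ≤ a) (hb : 1 ≤ b)
    (k₁ k₂ k₃ l₁ l₂ l₃ : ℕ) :
    (k₁ + l₂ = a * b + b - 1 ∧ k₂ + l₁ = a ∧ k₃ + l₃ = 1 ∧
     k₃ + l₁ = a ∧ k₁ + l₃ = a * b ∧ k₂ + l₂ = b ∧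
     k₂ + l₃ = 1 ∧ k₃ + l₂ = b ∧ k₁ + l₁ = a * b + a - 1)
      ↔ ((k₁, k₂, k₃, l₁, l₂, l₃) = (a * b - 1, 0, 0, a, b, 1) ∨
         (k₁, k₂, k₃, l₁, l₂, l₃) = (a * b, 1, 1, a - 1, b - 1, 0)) := by
  have ha_le : a ≤ a * b := Nat.le_mul_of_pos_right a hb
  have hb_le : b ≤ a * b := Nat.le_mul_of_pos_left b ha
  simp only [Prod.mk.injEq]
  constructor
  · rintro ⟨_, _, _, _, _, _, hk₂l₃, _, _⟩
    rcases Nat.add_eq_one_iff.mp hk₂l₃ with ⟨rfl, rfl⟩ | ⟨rfl, rfl⟩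
    · left; omega
    · right; omega
  · rintro (⟨rfl, rfl, rfl, rfl, rfl, rfl⟩ | ⟨rfl, rfl, rfl, rfl, rfl, rfl⟩) <;> omega
end

section
/- Let a, b ≥ 1 be natural numbers, set m = ab + a + b, and let L_3(a,b) = [[ab+b-1, a, 1], [a, ab, b], [1, b, ab+a-1]]. Then C_{L_3(a,b)} = 0, i.e., the coefficient of the monomial x^{L_3(a,b)} in the m-th power of the 3×3 determinant polynomial vanishes. -/
/-!
By the multinomial theorem applied to the six terms of the `3 × 3` determinant, `C_L` is a signed
sum of multinomial coefficients over the ways of writing `L` as a sum of `m` permutation matrices.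
For `L = L₃(a,b)` there are exactly two such ways: with multiplicities `(ab, b-1, a-1, 1, 1, 0)`
and `(ab-1, b, a, 0, 0, 1)` on the permutations listed as in `Matrix.det_fin_three`. They differ by
the sign vector itself, so the two terms have opposite signs, while
`(ab)! (a-1)! (b-1)! = (ab-1)! a! b!` makes their multinomial coefficients equal.
-/

open MvPolynomial Finset

theorem MvPolynomial.coeff_sum_monomial_pow {σ ι R : Type*} [CommSemiring R] [DecidableEq σ]
    [DecidableEq ι] (s : Finset ι) (d : ι → σ →₀ ℕ) (c : ι → R) (m : ℕ) (L : σ →₀ ℕ) :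
    coeff L ((∑ i ∈ s, monomial (d i) (c i)) ^ m) =
      ∑ k ∈ piAntidiag s m with ∑ i ∈ s, k i • d i = L,
        (Nat.multinomial s k : R) * ∏ i ∈ s, c i ^ k i := by
  simp only [sum_pow_eq_sum_piAntidiag, coeff_sum, monomial_pow, ← monomial_sum_prod,
    ← C_eq_coe_nat, coeff_C_mul, coeff_monomial, mul_ite, mul_zero, sum_filter]

/-- The six terms of `Matrix.det_fin_three`, in that order. -/
noncomputable def detFinThreeExponent : Fin 6 → Fin 3 × Fin 3 →₀ ℕ :=
  ![Finsupp.single (0, 0) 1 + Finsupp.single (1, 1) 1 + Finsupp.single (2, 2) 1,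
    Finsupp.single (0, 0) 1 + Finsupp.single (1, 2) 1 + Finsupp.single (2, 1) 1,
    Finsupp.single (0, 1) 1 + Finsupp.single (1, 0) 1 + Finsupp.single (2, 2) 1,
    Finsupp.single (0, 1) 1 + Finsupp.single (1, 2) 1 + Finsupp.single (2, 0) 1,
    Finsupp.single (0, 2) 1 + Finsupp.single (1, 0) 1 + Finsupp.single (2, 1) 1,
    Finsupp.single (0, 2) 1 + Finsupp.single (1, 1) 1 + Finsupp.single (2, 0) 1]

def detFinThreeSign : Fin 6 → ℤ := ![1, -1, -1, 1, 1, -1]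

theorem det_of_X_fin_three_eq_sum_monomial :
    (Matrix.of fun i j : Fin 3 => (X (i, j) : MvPolynomial (Fin 3 × Fin 3) ℤ)).det =
      ∑ i, monomial (detFinThreeExponent i) (detFinThreeSign i) := by
  simp only [Matrix.det_fin_three, Matrix.of_apply, Fin.sum_univ_six, X, monomial_mul,
    detFinThreeExponent, detFinThreeSign]
  simp only [Matrix.cons_val, mul_one, map_neg]
  ring

def l3Solution₁ (a b : ℕ) : Fin 6 → ℕ := ![a * b, b - 1, a - 1, 1, 1, 0]

def l3Solution₂ (a b : ℕ) : Fin 6 → ℕ := ![a * b - 1, b, a, 0, 0, 1]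

theorem sum_smul_detFinThreeExponent_eq_L3_iff {a b : ℕ} (ha : 1 ≤ a) (hb : 1 ≤ b)
    (k : Fin 6 → ℕ) :
    ∑ i, k i • detFinThreeExponent i = Finsupp.equivFunOnFinite.symm (fun p => L3 a b p.1 p.2) ↔
      k = l3Solution₁ a b ∨ k = l3Solution₂ a b := by
  have hab : 1 ≤ a * b := Nat.one_le_iff_ne_zero.mpr (by positivity)
  simp [Finsupp.ext_iff, Prod.forall, Fin.forall_fin_succ, _root_.funext_iff, Fin.sum_univ_six,
    detFinThreeExponent, Finsupp.single_apply, L3, l3Solution₁, l3Solution₂]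
  generalize a * b = c at hab ⊢
  omega

theorem l3Solution₁_ne_l3Solution₂ (a b : ℕ) : l3Solution₁ a b ≠ l3Solution₂ a b :=
  fun h => by simpa [l3Solution₁, l3Solution₂] using congrFun h 3

theorem filter_sum_smul_detFinThreeExponent_eq_L3 {a b : ℕ} (ha : 1 ≤ a) (hb : 1 ≤ b) :
    {k ∈ piAntidiag (univ : Finset (Fin 6)) (a * b + a + b) |
        ∑ i, k i • detFinThreeExponent i = Finsupp.equivFunOnFinite.symm fun p => L3 a b p.1 p.2} =
      {l3Solution₁ a b, l3Solution₂ a b} := by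
  have hab : 1 ≤ a * b := Nat.one_le_iff_ne_zero.mpr (by positivity)
  ext k
  simp only [mem_filter, mem_piAntidiag, sum_smul_detFinThreeExponent_eq_L3_iff ha hb,
    mem_insert, mem_singleton]
  refine ⟨And.right, fun hk => ⟨⟨?_, by simp⟩, hk⟩⟩
  rcases hk with rfl | rfl <;> simp [Fin.sum_univ_six, l3Solution₁, l3Solution₂] <;> omega

theorem multinomial_l3Solution₁_eq {a b : ℕ} (ha : 1 ≤ a) (hb : 1 ≤ b) :
    Nat.multinomial univ (l3Solution₁ a b) = Nat.multinomial univ (l3Solution₂ a b) := by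
  obtain ⟨a, rfl⟩ := Nat.exists_eq_add_of_le' ha
  obtain ⟨b, rfl⟩ := Nat.exists_eq_add_of_le' hb
  obtain ⟨c, hc⟩ : ∃ c, (a + 1) * (b + 1) = c + 1 := ⟨a * b + a + b, by ring⟩
  simp only [Nat.multinomial, Fin.sum_univ_six, Fin.prod_univ_six, l3Solution₁, l3Solution₂, hc,
    Matrix.cons_val, Nat.add_sub_cancel]
  congr 1
  · congr 1
    omega
  · simp only [Nat.factorial_succ]
    rw [← hc]
    ring

theorem prod_detFinThreeSign_pow_l3Solution₁_eq_neg {a b : ℕ} (ha : 1 ≤ a) (hb : 1 ≤ b) :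
    ∏ i, detFinThreeSign i ^ l3Solution₁ a b i = -∏ i, detFinThreeSign i ^ l3Solution₂ a b i := by
  obtain ⟨a, rfl⟩ := Nat.exists_eq_add_of_le' ha
  obtain ⟨b, rfl⟩ := Nat.exists_eq_add_of_le' hb
  simp only [Fin.prod_univ_six, l3Solution₁, l3Solution₂, detFinThreeSign, Matrix.cons_val,
    Nat.add_sub_cancel]
  ring

theorem coeff_L3_eq_zero (a b : ℕ) (ha : 1 ≤ a) (hb : 1 ≤ b)
    (m : ℕ) (hm : m = a * b + a + b) :
    coeffC 3 m (L3 a b) = 0 := by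
  subst hm
  rw [coeffC, det_of_X_fin_three_eq_sum_monomial, coeff_sum_monomial_pow,
    filter_sum_smul_detFinThreeExponent_eq_L3 ha hb,
    sum_pair (l3Solution₁_ne_l3Solution₂ a b), multinomial_l3Solution₁_eq ha hb,
    prod_detFinThreeSign_pow_l3Solution₁_eq_neg ha hb, mul_neg, neg_add_cancel]
end

section
/- Let n ≥ 3, let a, b ≥ 1 be natural numbers, set m = ab + a + b, and let L_n(a,b) be the n×n matrix whose upper-left 3×3 block is L_3(a,b) = [[ab+b-1, a, 1], [a, ab, b], [1, b, ab+a-1]], whose remaining diagonal entries equal m, and whose other entries are 0. If σ₁, …, σ_m are permutations of {1,…,n} such that ∏_{i=1}^{m} x_{1σᵢ(1)} x_{2σᵢ(2)} ⋯ x_{nσᵢ(n)} = x^{L_n(a,b)}, then every σᵢ fixes each point k with 4 ≤ k ≤ n. -/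
/-! Every variable `x_{r σᵢ(r)}` occurring in the left-hand product must occur in `x^{L_n(a,b)}`,
but for `r ≥ 4` the only nonzero entry of row `r` of `L_n(a,b)` is the diagonal one. -/

open MvPolynomial

theorem MvPolynomial.prod_X_pow_eq_monomial_sum {R σ ι : Type*} [CommSemiring R]
    (s : Finset ι) (f : ι → σ) (e : ι → ℕ) :
    ∏ i ∈ s, (X (f i) : MvPolynomial σ R) ^ e i
      = monomial (∑ i ∈ s, Finsupp.single (f i) (e i)) 1 := by
  simp_rw [monomial_sum_one, X_pow_eq_monomial]

theorem ne_zero_of_prod_prod_X_eq_prod_X_pow {R ι κ : Type*} [CommSemiring R] [Nontrivial R]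
    [Fintype ι] [Fintype κ] (σ : ι → κ → κ) (L : κ → κ → ℕ)
    (h : ∏ i, ∏ r, (X (r, σ i r) : MvPolynomial (κ × κ) R) = ∏ p : κ × κ, X p ^ L p.1 p.2)
    (i : ι) (r : κ) : L r (σ i r) ≠ 0 := by
  classical
  have hexp : ∑ x : ι × κ, Finsupp.single (x.2, σ x.1 x.2) 1
      = ∑ p : κ × κ, Finsupp.single p (L p.1 p.2) := by
    have hlhs := prod_X_pow_eq_monomial_sum (R := R) Finset.univ
      (fun x : ι × κ ↦ (x.2, σ x.1 x.2)) 1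
    simp only [Pi.one_apply, pow_one] at hlhs
    rw [← Fintype.prod_prod_type', hlhs, prod_X_pow_eq_monomial_sum] at h
    exact (monomial_left_inj one_ne_zero).mp h
  have hcoeff : (∑ p : κ × κ, Finsupp.single p (L p.1 p.2)) (r, σ i r) = L r (σ i r) := by
    simp [Finsupp.single_apply]
  rw [← Nat.one_le_iff_ne_zero, ← hcoeff, ← hexp, Finsupp.finsetSum_apply]
  calc 1 = Finsupp.single ((i, r).2, σ (i, r).1 (i, r).2) 1 (r, σ i r) := by simp
    _ ≤ _ := Finset.single_le_sum
      (f := fun x : ι × κ ↦ Finsupp.single (x.2, σ x.1 x.2) 1 (r, σ i r))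
      (fun _ _ ↦ Nat.zero_le _) (Finset.mem_univ (i, r))

theorem Lmat_eq_zero_of_three_le {n a b : ℕ} {k j : Fin n} (hk : 3 ≤ (k : ℕ)) (hkj : k ≠ j) :
    Lmat n a b k j = 0 := by
  rw [Lmat, dif_neg (by omega), if_neg hkj]

theorem perms_fix_tail_general (n a b : ℕ)
    (m : ℕ)
    (σ : Fin m → Equiv.Perm (Fin n))
    (hprod : (∏ i : Fin m, ∏ r : Fin n,
        (MvPolynomial.X (r, σ i r) : MvPolynomial (Fin n × Fin n) ℤ))
      = ∏ p : Fin n × Fin n,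
          (MvPolynomial.X p : MvPolynomial (Fin n × Fin n) ℤ) ^ (Lmat n a b p.1 p.2)) :
    ∀ i : Fin m, ∀ k : Fin n, 3 ≤ (k : ℕ) → σ i k = k := by
  intro i k hk
  by_contra hmoved
  exact ne_zero_of_prod_prod_X_eq_prod_X_pow (fun i ↦ σ i) (Lmat n a b) hprod i k
    (Lmat_eq_zero_of_three_le hk (Ne.symm hmoved))

/-- If the product over `i = 1, …, m` of the diagonal monomials
`x_{1 σᵢ(1)} x_{2 σᵢ(2)} ⋯ x_{n σᵢ(n)}` equals the monomial `x^{L_n(a,b)}`,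
then every `σᵢ` fixes each point `k` with `4 ≤ k ≤ n`
(in 0-indexed terms, each `k : Fin n` with `3 ≤ (k : ℕ)`). -/
theorem perms_fix_tail (n a b : ℕ) (hn : 3 ≤ n) (ha : 1 ≤ a) (hb : 1 ≤ b)
    (m : ℕ) (hm : m = a * b + a + b)
    (σ : Fin m → Equiv.Perm (Fin n))
    (hprod : (∏ i : Fin m, ∏ r : Fin n,
        (MvPolynomial.X (r, σ i r) : MvPolynomial (Fin n × Fin n) ℤ))
      = ∏ p : Fin n × Fin n,
          (MvPolynomial.X p : MvPolynomial (Fin n × Fin n) ℤ) ^ (Lmat n a b p.1 p.2)) :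
    ∀ i : Fin m, ∀ k : Fin n, 3 ≤ (k : ℕ) → σ i k = k :=
  perms_fix_tail_general n a b m σ hprod
end
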